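/- arXiv:1412.4452 — 12 statements merged into one kernel-verified Lean document; each statement's English description precedes it below -/
import Mathlib

section
/- For any vector x ∈ ℝⁿ, the zero-norm of x (the number of nonzero components of x) equals the optimal value of the convex program min { ⟨e, e − v⟩ : ⟨v, |x|⟩ = 0, 0 ≤ v ≤ e, v ∈ ℝⁿ }, where e ∈ ℝⁿ is the vector of all ones and |x| denotes the componentwise absolute value of x. -/
/-- For any `x ∈ ℝⁿ`, the zero-norm of `x` (the number of nonzero components)
is the optimal value (i.e. the least element of the set of attainable objective values) of
`min { ⟨e, e − v⟩ : ⟨v, |x|⟩ = 0, 0 ≤ v ≤ e }`. -/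
theorem zero_norm_variational (n : ℕ) (x : Fin n → ℝ) :
    IsLeast
      {c : ℝ | ∃ v : Fin n → ℝ,
        (∑ i, v i * |x i|) = 0 ∧ (∀ i, 0 ≤ v i) ∧ (∀ i, v i ≤ 1) ∧
        c = ∑ i, (1 - v i)}
      (((Finset.univ.filter fun i => x i ≠ 0).card : ℝ)) := by
  constructor
  · refine ⟨fun i => if x i = 0 then 1 else 0, ?_, ?_, ?_, ?_⟩
    · apply Finset.sum_eq_zero
      intro i _
      by_cases h : x i = 0 <;> simp [h]
    · intro i; by_cases h : x i = 0 <;> simp [h]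
    · intro i; by_cases h : x i = 0 <;> simp [h]
    · rw [Finset.card_filter]
      push_cast
      apply Finset.sum_congr rfl
      intro i _
      by_cases h : x i = 0 <;> simp [h]
  · rintro c ⟨v, hsum, h0, h1, rfl⟩
    have hz : ∀ i, x i ≠ 0 → v i = 0 := by
      intro i hi
      have hterm : ∀ j ∈ Finset.univ, 0 ≤ v j * |x j| := fun j _ =>
        mul_nonneg (h0 j) (abs_nonneg _)
      have := (Finset.sum_eq_zero_iff_of_nonneg hterm).mp hsum i (Finset.mem_univ i)
      have habs : |x i| ≠ 0 := fun h => hi (abs_eq_zero.mp h)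
      exact (mul_eq_zero.mp this).resolve_right habs
    calc ((Finset.univ.filter fun i => x i ≠ 0).card : ℝ)
        = ∑ i ∈ Finset.univ.filter fun i => x i ≠ 0, (1 - v i) := by
          rw [Finset.sum_congr rfl (fun i hi => by
            rw [hz i (Finset.mem_filter.mp hi).2])]
          simp
      _ ≤ ∑ i, (1 - v i) := by
          apply Finset.sum_le_sum_of_subset_of_nonneg (Finset.filter_subset _ _)
          intro i _ _
          linarith [h1 i]
end

section
/- Every locally optimal solution (x*, v*) of the MPEC problem min { ⟨e, e − v⟩ : ‖Ax − b‖ ≤ δ, ⟨v, |x|⟩ = 0, 0 ≤ v ≤ e, (x, v) ∈ ℝⁿ × ℝⁿ } satisfies v* = e − sign(|x*|), i.e., v*ᵢ = 0 if x*ᵢ ≠ 0 and v*ᵢ = 1 if x*ᵢ = 0. -/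
/-!
Complementarity `vᵢ |xᵢ| = 0` with `vᵢ ≥ 0` forces `vᵢ = 0` wherever `xᵢ ≠ 0`. Where `xᵢ = 0`,
raising `vᵢ` by a small `t > 0` keeps the point feasible (the constraint on `x` is untouched) and
lowers the objective by `t`, so local optimality forces `vᵢ = 1`.
-/

/-- The Euclidean norm of a vector in `ℝᵐ`. -/
noncomputable def enorm {m : ℕ} (u : Fin m → ℝ) : ℝ := Real.sqrt (∑ i, u i ^ 2)

/-- Feasibility for the MPEC problem
`min { ⟨e, e − v⟩ : ‖Ax − b‖ ≤ δ, ⟨v, |x|⟩ = 0, 0 ≤ v ≤ e }`. -/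
noncomputable def MPECFeasible {m n : ℕ} (A : Matrix (Fin m) (Fin n) ℝ) (b : Fin m → ℝ)
    (δ : ℝ) (x v : Fin n → ℝ) : Prop :=
  _root_.enorm (A.mulVec x - b) ≤ δ ∧ (∑ i, v i * |x i|) = 0 ∧ ∀ i, 0 ≤ v i ∧ v i ≤ 1

theorem enorm_sub_self {m : ℕ} (u : Fin m → ℝ) : _root_.enorm (u - u) = 0 := by
  simp [_root_.enorm]

theorem enorm_single {m : ℕ} (i : Fin m) {t : ℝ} (ht : 0 ≤ t) :
    _root_.enorm (Pi.single i t) = t := by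
  rw [_root_.enorm, Fintype.sum_eq_single i fun j hj => by simp [hj], Pi.single_eq_same,
    Real.sqrt_sq ht]

theorem Finset.sum_one_sub_add_single {ι : Type*} [Fintype ι] [DecidableEq ι] (v : ι → ℝ)
    (i : ι) (t : ℝ) : ∑ j, (1 - (v + Pi.single i t : ι → ℝ) j) = ∑ j, (1 - v j) - t := by
  simp only [Pi.add_apply, ← sub_sub, Finset.sum_sub_distrib, Finset.sum_pi_single',
    if_pos (Finset.mem_univ i)]

namespace MPECFeasible

variable {m n : ℕ} {A : Matrix (Fin m) (Fin n) ℝ} {b : Fin m → ℝ} {δ : ℝ} {x v : Fin n → ℝ}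

theorem mul_abs_eq_zero (h : MPECFeasible A b δ x v) (i : Fin n) : v i * |x i| = 0 :=
  (Finset.sum_eq_zero_iff_of_nonneg fun j _ => mul_nonneg (h.2.2 j).1 (abs_nonneg _)).1 h.2.1 i
    (Finset.mem_univ i)

theorem apply_eq_zero (h : MPECFeasible A b δ x v) {i : Fin n} (hi : x i ≠ 0) : v i = 0 :=
  (mul_eq_zero.1 (h.mul_abs_eq_zero i)).resolve_right (abs_ne_zero.2 hi)

theorem add_single (h : MPECFeasible A b δ x v) {i : Fin n} (hi : x i = 0) {t : ℝ}
    (ht₀ : 0 ≤ t) (ht₁ : v i + t ≤ 1) : MPECFeasible A b δ x (v + Pi.single i t) := by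
  refine ⟨h.1, ?_, fun j => ?_⟩
  · simpa [add_mul, Finset.sum_add_distrib, Pi.single_apply, hi] using h.2.1
  · rcases eq_or_ne j i with rfl | hj
    · simp only [Pi.add_apply, Pi.single_eq_same]
      constructor <;> linarith [(h.2.2 j).1]
    · simpa [Pi.single_apply, hj] using h.2.2 j

theorem apply_eq_one_of_locally_optimal (h : MPECFeasible A b δ x v) {ε : ℝ} (hε : 0 < ε)
    (hopt : ∀ x' v' : Fin n → ℝ, MPECFeasible A b δ x' v' →
      _root_.enorm (x' - x) < ε → _root_.enorm (v' - v) < ε →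
      (∑ i, (1 - v i)) ≤ ∑ i, (1 - v' i))
    {i : Fin n} (hi : x i = 0) : v i = 1 := by
  by_contra hne
  have hlt : v i < 1 := lt_of_le_of_ne (h.2.2 i).2 hne
  set t := min (ε / 2) (1 - v i)
  have ht₀ : 0 < t := lt_min (half_pos hε) (sub_pos.2 hlt)
  have htε : t < ε := (min_le_left _ _).trans_lt (half_lt_self hε)
  have ht₁ : v i + t ≤ 1 := by linarith [min_le_right (ε / 2) (1 - v i)]
  have hle := hopt x (v + Pi.single i t) (h.add_single hi ht₀.le ht₁)
    (by rwa [enorm_sub_self]) (by rwa [add_sub_cancel_left, enorm_single i ht₀.le])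
  rw [Finset.sum_one_sub_add_single] at hle
  linarith

end MPECFeasible

theorem mpec_local_opt_form_general {m n : ℕ} (A : Matrix (Fin m) (Fin n) ℝ) (b : Fin m → ℝ)
    (δ : ℝ) (xs vs : Fin n → ℝ)
    (hfeas : MPECFeasible A b δ xs vs)
    (hloc : ∃ ε > (0 : ℝ), ∀ x v : Fin n → ℝ, MPECFeasible A b δ x v →
      _root_.enorm (x - xs) < ε → _root_.enorm (v - vs) < ε →
      (∑ i, (1 - vs i)) ≤ ∑ i, (1 - v i)) :
    vs = fun i => if xs i = 0 then 1 else 0 := by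
  obtain ⟨ε, hε, hopt⟩ := hloc
  funext i
  split_ifs with hi
  · exact hfeas.apply_eq_one_of_locally_optimal hε hopt hi
  · exact hfeas.apply_eq_zero hi

/-- every locally optimal solution `(x*, v*)` of the MPEC problem satisfies
`v* = e − sign(|x*|)`, i.e. `v*ᵢ = 0` if `x*ᵢ ≠ 0` and `v*ᵢ = 1` if `x*ᵢ = 0`. -/
theorem mpec_local_opt_form {m n : ℕ} (A : Matrix (Fin m) (Fin n) ℝ) (b : Fin m → ℝ)
    (δ : ℝ) (hδ : 0 ≤ δ) (xs vs : Fin n → ℝ)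
    (hfeas : MPECFeasible A b δ xs vs)
    (hloc : ∃ ε > (0 : ℝ), ∀ x v : Fin n → ℝ, MPECFeasible A b δ x v →
      _root_.enorm (x - xs) < ε → _root_.enorm (v - vs) < ε →
      (∑ i, (1 - vs i)) ≤ ∑ i, (1 - v i)) :
    vs = fun i => if xs i = 0 then 1 else 0 :=
  mpec_local_opt_form_general A b δ xs vs hfeas hloc
end

section
/- A point x* ∈ ℝⁿ is a locally optimal solution of the zero-norm minimization problem min { ‖x‖₀ : ‖Ax − b‖ ≤ δ } if and only if (x*, e − sign(|x*|)) is a locally optimal solution of the MPEC problem min { ⟨e, e − v⟩ : ‖Ax − b‖ ≤ δ, ⟨v, |x|⟩ = 0, 0 ≤ v ≤ e } over (x, v) ∈ ℝⁿ × ℝⁿ. -/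
/-- The zero-norm (number of nonzero components) of `x ∈ ℝⁿ`. -/
noncomputable def zeroNorm {n : ℕ} (x : Fin n → ℝ) : ℕ := (Finset.univ.filter fun i => x i ≠ 0).card

/-!
Both sides hold for every feasible `x*`. Inside a ball around `x*` of radius at most
`min {|x*ᵢ| : x*ᵢ ≠ 0}`, every point is nonzero wherever `x*` is, so `‖·‖₀` cannot drop below
`‖x*‖₀` there. For the MPEC, complementarity `⟨v, |x|⟩ = 0` with `v ≥ 0` forces `vᵢ = 0` on the
support of `x`, hence on the support of `x*`, while `v ≤ e` elsewhere; so `⟨e, e − v⟩ ≥ ‖x*‖₀`,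
which is the objective value at `(x*, e − sign(|x*|))`.
-/

lemma abs_le_enorm {n : ℕ} (u : Fin n → ℝ) (i : Fin n) : |u i| ≤ _root_.enorm u :=
  calc |u i| = Real.sqrt (u i ^ 2) := (Real.sqrt_sq_eq_abs _).symm
    _ ≤ Real.sqrt (∑ j, u j ^ 2) :=
      Real.sqrt_le_sqrt (Finset.single_le_sum (fun j _ => sq_nonneg (u j)) (Finset.mem_univ i))

open Topology in
lemma exists_pos_le_abs_of_ne_zero {ι : Type*} [Finite ι] (y : ι → ℝ) :
    ∃ ε > 0, ∀ i, y i ≠ 0 → ε ≤ |y i| := by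
  have hsmall : ∀ᶠ ε in 𝓝[>] (0 : ℝ), ε ∈ Set.Ioi 0 ∧ ∀ i, y i ≠ 0 → ε ≤ |y i| := by
    refine eventually_mem_nhdsWithin.and (Filter.eventually_all.2 fun i => ?_)
    by_cases hi : y i = 0
    · simp [hi]
    · exact ((eventually_le_nhds (abs_pos.2 hi)).filter_mono nhdsWithin_le_nhds).mono fun _ h _ => h
  exact hsmall.exists

lemma ne_zero_of_enorm_sub_lt_abs {n : ℕ} {x y : Fin n → ℝ} {i : Fin n}
    (h : _root_.enorm (x - y) < |y i|) : x i ≠ 0 := by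
  intro hxi
  have hcomp := abs_le_enorm (x - y) i
  rw [Pi.sub_apply, hxi, zero_sub, abs_neg] at hcomp
  linarith

lemma exists_pos_support_subset_of_enorm_sub_lt {n : ℕ} (y : Fin n → ℝ) :
    ∃ ε > 0, ∀ x, _root_.enorm (x - y) < ε → ∀ i, y i ≠ 0 → x i ≠ 0 := by
  obtain ⟨ε, hε, hle⟩ := exists_pos_le_abs_of_ne_zero y
  exact ⟨ε, hε, fun x hx i hi => ne_zero_of_enorm_sub_lt_abs (hx.trans_le (hle i hi))⟩

lemma zeroNorm_le_of_support_subset {n : ℕ} {x y : Fin n → ℝ} (h : ∀ i, y i ≠ 0 → x i ≠ 0) :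
    zeroNorm y ≤ zeroNorm x :=
  Finset.card_le_card fun i => by simpa only [Finset.mem_filter, Finset.mem_univ, true_and] using h i

lemma MPECFeasible.eq_zero_of_ne_zero {m n : ℕ} {A : Matrix (Fin m) (Fin n) ℝ} {b : Fin m → ℝ}
    {δ : ℝ} {x v : Fin n → ℝ} (hfeas : MPECFeasible A b δ x v) {i : Fin n} (hi : x i ≠ 0) :
    v i = 0 := by
  obtain ⟨-, hcompl, hbox⟩ := hfeas
  have hterm := (Finset.sum_eq_zero_iff_of_nonneg fun j _ =>
    mul_nonneg (hbox j).1 (abs_nonneg (x j))).1 hcompl i (Finset.mem_univ i)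
  exact (mul_eq_zero.1 hterm).resolve_right (abs_ne_zero.2 hi)

lemma mpecFeasible_indicator {m n : ℕ} {A : Matrix (Fin m) (Fin n) ℝ} {b : Fin m → ℝ} {δ : ℝ}
    {x : Fin n → ℝ} (hx : _root_.enorm (A.mulVec x - b) ≤ δ) :
    MPECFeasible A b δ x fun i => if x i = 0 then 1 else 0 := by
  refine ⟨hx, Finset.sum_eq_zero fun i _ => ?_, fun i => ?_⟩ <;> by_cases h : x i = 0 <;> simp [h]

lemma sum_one_sub_indicator_le {n : ℕ} {y v : Fin n → ℝ} (hv : ∀ i, v i ≤ 1)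
    (hsupp : ∀ i, y i ≠ 0 → v i = 0) :
    ∑ i, (1 - if y i = 0 then (1 : ℝ) else 0) ≤ ∑ i, (1 - v i) := by
  refine Finset.sum_le_sum fun i _ => ?_
  by_cases h : y i = 0
  · simpa [h] using hv i
  · simp [h, hsupp i h]

theorem local_opt_iff_mpec_local_opt_general {m n : ℕ} (A : Matrix (Fin m) (Fin n) ℝ)
    (b : Fin m → ℝ) (δ : ℝ) (xs : Fin n → ℝ)
    (vstar : Fin n → ℝ) (hvstar : vstar = fun i => if xs i = 0 then 1 else 0) :
    (_root_.enorm (A.mulVec xs - b) ≤ δ ∧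
      ∃ ε > (0 : ℝ), ∀ x : Fin n → ℝ, _root_.enorm (A.mulVec x - b) ≤ δ →
        _root_.enorm (x - xs) < ε → zeroNorm xs ≤ zeroNorm x)
    ↔
    (MPECFeasible A b δ xs vstar ∧
      ∃ ε > (0 : ℝ), ∀ x v : Fin n → ℝ, MPECFeasible A b δ x v →
        _root_.enorm (x - xs) < ε → _root_.enorm (v - vstar) < ε →
        (∑ i, (1 - vstar i)) ≤ ∑ i, (1 - v i)) := by
  subst hvstar
  obtain ⟨ε, hε, hsupp⟩ := exists_pos_support_subset_of_enorm_sub_lt xs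
  constructor
  · rintro ⟨hfeas, -⟩
    refine ⟨mpecFeasible_indicator hfeas, ε, hε, fun x v hxv hclose _ => ?_⟩
    exact sum_one_sub_indicator_le (fun i => (hxv.2.2 i).2)
      fun i hi => hxv.eq_zero_of_ne_zero (hsupp x hclose i hi)
  · rintro ⟨⟨hfeas, -⟩, -⟩
    exact ⟨hfeas, ε, hε, fun x _ hclose => zeroNorm_le_of_support_subset (hsupp x hclose)⟩

/-- `x*` is a locally optimal solution of `min { ‖x‖₀ : ‖Ax − b‖ ≤ δ }`
iff `(x*, e − sign(|x*|))` is a locally optimal solution of the MPEC problem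
`min { ⟨e, e − v⟩ : ‖Ax − b‖ ≤ δ, ⟨v, |x|⟩ = 0, 0 ≤ v ≤ e }`. -/
theorem local_opt_iff_mpec_local_opt {m n : ℕ} (A : Matrix (Fin m) (Fin n) ℝ)
    (b : Fin m → ℝ) (δ : ℝ) (hδ : 0 ≤ δ) (xs : Fin n → ℝ)
    (vstar : Fin n → ℝ) (hvstar : vstar = fun i => if xs i = 0 then 1 else 0) :
    (_root_.enorm (A.mulVec xs - b) ≤ δ ∧
      ∃ ε > (0 : ℝ), ∀ x : Fin n → ℝ, _root_.enorm (A.mulVec x - b) ≤ δ →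
        _root_.enorm (x - xs) < ε → zeroNorm xs ≤ zeroNorm x)
    ↔
    (MPECFeasible A b δ xs vstar ∧
      ∃ ε > (0 : ℝ), ∀ x v : Fin n → ℝ, MPECFeasible A b δ x v →
        _root_.enorm (x - xs) < ε → _root_.enorm (v - vstar) < ε →
        (∑ i, (1 - vstar i)) ≤ ∑ i, (1 - v i)) :=
  local_opt_iff_mpec_local_opt_general A b δ xs vstar hvstar
end

section
/- Assume the feasible set {x ∈ ℝⁿ : ‖Ax − b‖ ≤ δ} is nonempty. Then for any given ρ > 0, the penalty problem min { ⟨e, e − v⟩ + ρ⟨v, |x|⟩ : ‖Ax − b‖ ≤ δ, 0 ≤ v ≤ e } over (x, v) ∈ ℝⁿ × ℝⁿ has a nonempty set of globally optimal solutions, i.e., there exists a feasible pair (x̄, v̄) whose objective value is less than or equal to that of every feasible pair. -/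
open Finset

theorem exists_forall_le_comp_of_mem_preimage {E F G : Type*} [AddCommGroup E] [Module ℝ E]
    [FiniteDimensional ℝ E] [NormedAddCommGroup F] [NormedSpace ℝ F]
    [NormedAddCommGroup G] [NormedSpace ℝ G] (P : E →ₗ[ℝ] F) (Q : E →ₗ[ℝ] G)
    {K : Set G} (hK : IsCompact K) {φ : F → ℝ} (hφ : Continuous φ)
    (hφ_sublevel : ∀ t, IsCompact {u | φ u ≤ t}) {x₀ : E} (hx₀ : Q x₀ ∈ K) :
    ∃ x, Q x ∈ K ∧ ∀ y, Q y ∈ K → φ (P x) ≤ φ (P y) := by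
  -- The constraint set need not be compact, but the range of `x ↦ (P x, Q x)` is closed,
  -- so its part in `{φ ≤ φ (P x₀)} ×ˢ K` is compact.
  set R : Set (F × G) := ↑(LinearMap.range (P.prod Q))
  set C := R ∩ {u | φ u ≤ φ (P x₀)} ×ˢ K
  have hC : IsCompact C :=
    ((hφ_sublevel _).prod hK).inter_left (Submodule.closed_of_finiteDimensional _)
  have hx₀C : (P x₀, Q x₀) ∈ C := ⟨⟨x₀, rfl⟩, le_refl (φ (P x₀)), hx₀⟩
  obtain ⟨_, ⟨⟨x, rfl⟩, hxt, hxK⟩, hmin⟩ :=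
    hC.exists_isMinOn ⟨_, hx₀C⟩ (hφ.comp continuous_fst).continuousOn
  refine ⟨x, hxK, fun y hy => ?_⟩
  by_cases hyt : φ (P y) ≤ φ (P x₀)
  · exact hmin (show (P y, Q y) ∈ C from ⟨⟨y, rfl⟩, hyt, hy⟩)
  · exact hxt.trans (le_of_not_ge hyt)

theorem isCompact_setOf_sum_abs_le {ι : Type*} [Fintype ι] (t : ℝ) :
    IsCompact {u : ι → ℝ | ∑ i, |u i| ≤ t} := by
  refine Metric.isCompact_of_isClosed_isBounded
    (isClosed_le (continuous_finsetSum _ fun i _ => (continuous_apply i).abs) continuous_const)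
    (Metric.isBounded_closedBall (x := 0) (r := t) |>.subset fun u hu => ?_)
  have ht : 0 ≤ t := (Finset.sum_nonneg fun i _ => abs_nonneg (u i)).trans hu
  rw [mem_closedBall_zero_iff, pi_norm_le_iff_of_nonneg ht]
  exact fun i => (Finset.single_le_sum (fun j _ => abs_nonneg (u j)) (mem_univ i)).trans hu

theorem exists_forall_sum_abs_le {ι κ : Type*} [Fintype ι] [Fintype κ] (S : Finset ι)
    (Q : (ι → ℝ) →ₗ[ℝ] κ → ℝ) {K : Set (κ → ℝ)} (hK : IsCompact K) {x₀ : ι → ℝ}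
    (hx₀ : Q x₀ ∈ K) :
    ∃ x, Q x ∈ K ∧ ∀ y, Q y ∈ K → ∑ i ∈ S, |x i| ≤ ∑ i ∈ S, |y i| := by
  obtain ⟨x, hxK, hmin⟩ :=
    exists_forall_le_comp_of_mem_preimage (LinearMap.funLeft ℝ ℝ ((↑) : S → ι)) Q hK
      (continuous_finsetSum _ fun i _ => (continuous_apply i).abs)
      isCompact_setOf_sum_abs_le hx₀
  refine ⟨x, hxK, fun y hy => ?_⟩
  simpa only [← Finset.sum_coe_sort S, LinearMap.funLeft_apply, Function.comp_apply] using
    hmin y hy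

theorem enorm_eq_norm_symm_equiv {m : ℕ} (u : Fin m → ℝ) :
    _root_.enorm u = ‖(EuclideanSpace.equiv (Fin m) ℝ).symm u‖ := by
  simp [_root_.enorm, EuclideanSpace.norm_eq]

theorem isCompact_setOf_enorm_sub_le {m : ℕ} (b : Fin m → ℝ) (δ : ℝ) :
    IsCompact {y | _root_.enorm (y - b) ≤ δ} := by
  set e := (EuclideanSpace.equiv (Fin m) ℝ).symm
  have hK : {y | _root_.enorm (y - b) ≤ δ} = e ⁻¹' Metric.closedBall (e b) δ := by
    ext y
    simp [enorm_eq_norm_symm_equiv, dist_eq_norm, e]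
  rw [hK, ← e.coe_toHomeomorph, e.toHomeomorph.isCompact_preimage]
  exact isCompact_closedBall _ _

section Penalty

variable {ι : Type*} [Fintype ι]

def penalty (ρ : ℝ) (x v : ι → ℝ) : ℝ := (∑ i, (1 - v i)) + ρ * ∑ i, v i * |x i|

theorem penalty_indicator_le [DecidableEq ι] (ρ : ℝ) (x v : ι → ℝ)
    (hv : ∀ i, 0 ≤ v i ∧ v i ≤ 1) :
    penalty ρ x (fun i => if i ∈ univ.filter (fun j => ρ * |x j| ≤ 1) then 1 else 0) ≤
      penalty ρ x v := by
  -- Coordinatewise, `(1 - vᵢ) + ρ vᵢ |xᵢ|` is a convex combination of `1` and `ρ |xᵢ|`,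
  -- and the indicator picks the smaller of the two.
  have hsplit : ∀ w : ι → ℝ, penalty ρ x w = ∑ i, ((1 - w i) + ρ * (w i * |x i|)) := fun w => by
    rw [penalty, Finset.sum_add_distrib, Finset.mul_sum]
  rw [hsplit, hsplit]
  refine Finset.sum_le_sum fun i _ => ?_
  obtain ⟨hv0, hv1⟩ := hv i
  simp only [mem_filter, mem_univ, true_and]
  split_ifs <;> nlinarith [abs_nonneg (x i)]

theorem penalty_indicator_le_of_sum_abs_le [DecidableEq ι] {ρ : ℝ} (hρ : 0 ≤ ρ) (S : Finset ι)
    {x y : ι → ℝ} (h : ∑ i ∈ S, |x i| ≤ ∑ i ∈ S, |y i|) :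
    penalty ρ x (fun i => if i ∈ S then 1 else 0) ≤
      penalty ρ y (fun i => if i ∈ S then 1 else 0) := by
  simp only [penalty, ite_mul, one_mul, zero_mul, sum_ite_mem, univ_inter]
  gcongr

end Penalty

theorem penalty_problem_has_global_min_general {m n : ℕ} (A : Matrix (Fin m) (Fin n) ℝ)
    (b : Fin m → ℝ) (δ : ℝ)
    (hne : ∃ x : Fin n → ℝ, _root_.enorm (A.mulVec x - b) ≤ δ)
    (ρ : ℝ) (hρ : 0 < ρ) :
    ∃ xb vb : Fin n → ℝ,
      (_root_.enorm (A.mulVec xb - b) ≤ δ ∧ ∀ i, 0 ≤ vb i ∧ vb i ≤ 1) ∧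
      ∀ x v : Fin n → ℝ, _root_.enorm (A.mulVec x - b) ≤ δ → (∀ i, 0 ≤ v i ∧ v i ≤ 1) →
        (∑ i, (1 - vb i)) + ρ * ∑ i, vb i * |xb i| ≤
          (∑ i, (1 - v i)) + ρ * ∑ i, v i * |x i| := by
  classical
  obtain ⟨x₀, hx₀⟩ := hne
  choose xS hxS hxS_min using fun S : Finset (Fin n) =>
    exists_forall_sum_abs_le S A.mulVecLin (isCompact_setOf_enorm_sub_le b δ) hx₀
  let vS (S : Finset (Fin n)) (i : Fin n) : ℝ := if i ∈ S then 1 else 0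
  obtain ⟨Sb, -, hSb⟩ :=
    exists_min_image univ (fun S => penalty ρ (xS S) (vS S)) univ_nonempty
  refine ⟨xS Sb, vS Sb, ⟨hxS Sb, fun i => ?_⟩, fun x v hx hv => ?_⟩
  · simp only [vS]
    split_ifs <;> norm_num
  set Sx := univ.filter fun i => ρ * |x i| ≤ 1
  calc penalty ρ (xS Sb) (vS Sb) ≤ penalty ρ (xS Sx) (vS Sx) := hSb Sx (mem_univ _)
    _ ≤ penalty ρ x (vS Sx) := penalty_indicator_le_of_sum_abs_le hρ.le Sx (hxS_min Sx x hx)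
    _ ≤ penalty ρ x v := penalty_indicator_le ρ x v hv

/-- if the feasible set `{x : ‖Ax − b‖ ≤ δ}` is nonempty, then for any `ρ > 0`
the penalty problem `min { ⟨e, e − v⟩ + ρ⟨v, |x|⟩ : ‖Ax − b‖ ≤ δ, 0 ≤ v ≤ e }` has a
globally optimal solution. -/
theorem penalty_problem_has_global_min {m n : ℕ} (A : Matrix (Fin m) (Fin n) ℝ)
    (b : Fin m → ℝ) (δ : ℝ) (hδ : 0 ≤ δ)
    (hne : ∃ x : Fin n → ℝ, _root_.enorm (A.mulVec x - b) ≤ δ)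
    (ρ : ℝ) (hρ : 0 < ρ) :
    ∃ xb vb : Fin n → ℝ,
      (_root_.enorm (A.mulVec xb - b) ≤ δ ∧ ∀ i, 0 ≤ vb i ∧ vb i ≤ 1) ∧
      ∀ x v : Fin n → ℝ, _root_.enorm (A.mulVec x - b) ≤ δ → (∀ i, 0 ≤ v i ∧ v i ≤ 1) →
        (∑ i, (1 - vb i)) + ρ * ∑ i, vb i * |xb i| ≤
          (∑ i, (1 - v i)) + ρ * ∑ i, v i * |x i| :=
  penalty_problem_has_global_min_general A b δ hne ρ hρ
end

section
/- Assume the feasible set {x ∈ ℝⁿ : ‖Ax − b‖ ≤ δ} is nonempty, and let r = min { ‖x‖₀ : ‖Ax − b‖ ≤ δ } > 0 and α > 0 be such that |x|ᵣ↓ > α for all feasible x. Then for every ρ > 1/α, every globally optimal solution (x̄, v̄) of the penalty problem min { ⟨e, e − v⟩ + ρ⟨v, |x|⟩ : ‖Ax − b‖ ≤ δ, 0 ≤ v ≤ e } satisfies ‖x̄‖₀ = r and v̄ = e − sign(|x̄|). -/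
open Finset

def penaltyTerm (ρ x v : ℝ) : ℝ := 1 - v + ρ * (v * |x|)

section PenaltyTerm

variable {ρ x v : ℝ}

lemma penaltyTerm_nonneg (hρ : 0 ≤ ρ) (hv0 : 0 ≤ v) (hv1 : v ≤ 1) : 0 ≤ penaltyTerm ρ x v := by
  unfold penaltyTerm
  have : 0 ≤ ρ * (v * |x|) := by positivity
  linarith

lemma penaltyTerm_eq_one_add (ρ x v : ℝ) : penaltyTerm ρ x v = 1 + v * (ρ * |x| - 1) := by
  unfold penaltyTerm
  ring

lemma one_le_penaltyTerm (hx : 1 ≤ ρ * |x|) (hv0 : 0 ≤ v) : 1 ≤ penaltyTerm ρ x v := by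
  rw [penaltyTerm_eq_one_add]
  nlinarith

lemma penaltyTerm_eq_one_iff (hx : 1 < ρ * |x|) : penaltyTerm ρ x v = 1 ↔ v = 0 := by
  rw [penaltyTerm_eq_one_add, add_eq_left, mul_eq_zero, or_iff_left (by linarith)]

lemma penaltyTerm_eq_zero_iff (hρ : 0 < ρ) (hv0 : 0 ≤ v) (hv1 : v ≤ 1) :
    penaltyTerm ρ x v = 0 ↔ v = 1 ∧ x = 0 := by
  unfold penaltyTerm
  constructor
  · intro h
    have hρvx : 0 ≤ ρ * (v * |x|) := by positivity
    have hv : v = 1 := by linarith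
    subst hv
    simp_all [hρ.ne']
  · rintro ⟨rfl, rfl⟩
    simp

lemma penaltyTerm_sign (ρ x : ℝ) :
    penaltyTerm ρ x (if x = 0 then 1 else 0) = if x ≠ 0 then 1 else 0 := by
  by_cases hx : x = 0 <;> simp [penaltyTerm, hx]

lemma penaltyTerm_eq_ite_iff {α : ℝ} (hρ : 0 < ρ) (hρα : 1 < ρ * α) (hv0 : 0 ≤ v) (hv1 : v ≤ 1)
    (h : penaltyTerm ρ x v = if α < |x| then 1 else 0) :
    (x ≠ 0 ↔ α < |x|) ∧ v = if x = 0 then 1 else 0 := by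
  have hα : 0 < α := pos_of_mul_pos_right (by linarith) hρ.le
  by_cases hx : α < |x|
  · rw [if_pos hx, penaltyTerm_eq_one_iff (hρα.trans_le (by gcongr))] at h
    have hx0 : x ≠ 0 := fun h0 => by simp [h0] at hx; linarith
    simp [hx, hx0, h]
  · rw [if_neg hx, penaltyTerm_eq_zero_iff hρ hv0 hv1] at h
    simp [h.1, h.2, hα.le]

end PenaltyTerm

section

variable {ι : Type*} [Fintype ι] (p : ι → Prop) [DecidablePred p] {f : ι → ℝ}

lemma card_filter_le_sum (hf : ∀ i, (if p i then 1 else 0) ≤ f i) :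
    (#{i | p i} : ℝ) ≤ ∑ i, f i := by
  rw [← sum_boole]
  exact sum_le_sum fun i _ => hf i

lemma eq_ite_of_sum_le_card (hf : ∀ i, (if p i then 1 else 0) ≤ f i)
    (hsum : ∑ i, f i ≤ #{i | p i}) (i : ι) : f i = if p i then 1 else 0 := by
  have hgap : ∑ j, (f j - if p j then 1 else 0) = 0 := by
    apply le_antisymm
    · rw [sum_sub_distrib, sum_boole]
      linarith
    · exact sum_nonneg fun j _ => sub_nonneg.mpr (hf j)
  have := (sum_eq_zero_iff_of_nonneg fun j _ => sub_nonneg.mpr (hf j)).mp hgap i (mem_univ i)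
  linarith

end

lemma penaltyObjective_eq_sum_penaltyTerm {ι : Type*} [Fintype ι] (ρ : ℝ) (x v : ι → ℝ) :
    (∑ i, (1 - v i)) + ρ * ∑ i, v i * |x i| = ∑ i, penaltyTerm ρ (x i) (v i) := by
  rw [mul_sum, ← sum_add_distrib]
  rfl

theorem penalty_global_opt_solves_l0_general {m n : ℕ} (A : Matrix (Fin m) (Fin n) ℝ)
    (b : Fin m → ℝ) (δ : ℝ)
    (r : ℕ)
    (hr : IsLeast {k : ℕ | ∃ x : Fin n → ℝ, _root_.enorm (A.mulVec x - b) ≤ δ ∧ zeroNorm x = k} r)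
    (α : ℝ) (hα : 0 < α)
    (hαr : ∀ x : Fin n → ℝ, _root_.enorm (A.mulVec x - b) ≤ δ →
      r ≤ (Finset.univ.filter fun i => α < |x i|).card)
    (ρ : ℝ) (hρ : 1 / α < ρ) :
    ∀ xb vb : Fin n → ℝ,
      _root_.enorm (A.mulVec xb - b) ≤ δ → (∀ i, 0 ≤ vb i ∧ vb i ≤ 1) →
      (∀ x v : Fin n → ℝ, _root_.enorm (A.mulVec x - b) ≤ δ → (∀ i, 0 ≤ v i ∧ v i ≤ 1) →
        (∑ i, (1 - vb i)) + ρ * ∑ i, vb i * |xb i| ≤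
          (∑ i, (1 - v i)) + ρ * ∑ i, v i * |x i|) →
      zeroNorm xb = r ∧ vb = fun i => if xb i = 0 then 1 else 0 := by
  intro xb vb hxb hvb hopt
  have hρα : 1 < ρ * α := (div_lt_iff₀ hα).mp hρ
  have hρ0 : 0 < ρ := (one_div_pos.mpr hα).trans hρ
  obtain ⟨xs, hxs, rfl⟩ := hr.1
  have hupper : ∑ i, penaltyTerm ρ (xb i) (vb i) ≤ zeroNorm xs := by
    have := hopt xs (fun i => if xs i = 0 then 1 else 0) hxs (fun i => by split_ifs <;> norm_num)
    simp only [penaltyObjective_eq_sum_penaltyTerm, penaltyTerm_sign, sum_boole] at this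
    exact this
  have hterm : ∀ i, (if α < |xb i| then 1 else 0) ≤ penaltyTerm ρ (xb i) (vb i) := fun i => by
    split_ifs with hi
    · exact one_le_penaltyTerm (hρα.le.trans (by gcongr)) (hvb i).1
    · exact penaltyTerm_nonneg hρ0.le (hvb i).1 (hvb i).2
  have hcard : #{i | α < |xb i|} = zeroNorm xs := by
    have := (card_filter_le_sum _ hterm).trans hupper
    exact le_antisymm (by exact_mod_cast this) (hαr xb hxb)
  have hcoord i := penaltyTerm_eq_ite_iff hρ0 hρα (hvb i).1 (hvb i).2
    (eq_ite_of_sum_le_card _ hterm (by rw [hcard]; exact hupper) i)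
  refine ⟨?_, funext fun i => (hcoord i).2⟩
  rw [← hcard]
  exact congrArg card (filter_congr fun i _ => (hcoord i).1)

/-- let `r = min { ‖x‖₀ : ‖Ax − b‖ ≤ δ } > 0` and `α > 0` be such that the
`r`-th largest component of `|x|` exceeds `α` for all feasible `x` (i.e. every feasible `x`
has at least `r` components with `|xᵢ| > α`). Then for every `ρ > 1/α`, every globally
optimal solution `(x̄, v̄)` of the penalty problem satisfies `‖x̄‖₀ = r` and
`v̄ = e − sign(|x̄|)`. -/
theorem penalty_global_opt_solves_l0 {m n : ℕ} (A : Matrix (Fin m) (Fin n) ℝ)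
    (b : Fin m → ℝ) (δ : ℝ) (hδ : 0 ≤ δ)
    (hne : ∃ x : Fin n → ℝ, _root_.enorm (A.mulVec x - b) ≤ δ)
    (r : ℕ) (hrpos : 0 < r)
    (hr : IsLeast {k : ℕ | ∃ x : Fin n → ℝ, _root_.enorm (A.mulVec x - b) ≤ δ ∧ zeroNorm x = k} r)
    (α : ℝ) (hα : 0 < α)
    (hαr : ∀ x : Fin n → ℝ, _root_.enorm (A.mulVec x - b) ≤ δ →
      r ≤ (Finset.univ.filter fun i => α < |x i|).card)
    (ρ : ℝ) (hρ : 1 / α < ρ) :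
    ∀ xb vb : Fin n → ℝ,
      _root_.enorm (A.mulVec xb - b) ≤ δ → (∀ i, 0 ≤ vb i ∧ vb i ≤ 1) →
      (∀ x v : Fin n → ℝ, _root_.enorm (A.mulVec x - b) ≤ δ → (∀ i, 0 ≤ v i ∧ v i ≤ 1) →
        (∑ i, (1 - vb i)) + ρ * ∑ i, vb i * |xb i| ≤
          (∑ i, (1 - v i)) + ρ * ∑ i, v i * |x i|) →
      zeroNorm xb = r ∧ vb = fun i => if xb i = 0 then 1 else 0 :=
  penalty_global_opt_solves_l0_general A b δ r hr α hα hαr ρ hρ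
end

section
/- Assume the feasible set {x ∈ ℝⁿ : ‖Ax − b‖ ≤ δ} is nonempty, and let r = min { ‖x‖₀ : ‖Ax − b‖ ≤ δ } > 0 and α > 0 be such that |x|ᵣ↓ > α for all feasible x. Then for every ρ > 1/α, every globally optimal solution (x̄, v̄) of the MPEC problem min { ⟨e, e − v⟩ : ‖Ax − b‖ ≤ δ, ⟨v, |x|⟩ = 0, 0 ≤ v ≤ e } is a globally optimal solution of the penalty problem min { ⟨e, e − v⟩ + ρ⟨v, |x|⟩ : ‖Ax − b‖ ≤ δ, 0 ≤ v ≤ e }. -/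
/-!
The MPEC value is at most `r`: a sparsest feasible `x₀` together with the indicator `v` of its
zero set is MPEC-feasible with objective `‖x₀‖₀ = r`. The penalty objective of any feasible
`(x, v)` is at least `r`: coordinatewise `1 - vᵢ + ρ vᵢ |xᵢ| ≥ 0`, and it is `≥ 1` whenever
`|xᵢ| > α`, because then `ρ |xᵢ| > ρ α > 1`; at least `r` coordinates have `|xᵢ| > α`.
Since `(x̄, v̄)` satisfies the complementarity constraint, its penalty value equals its MPEC value.
-/

noncomputable def euclNorm {m : ℕ} (u : Fin m → ℝ) : ℝ := Real.sqrt (∑ i, u i ^ 2)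

section Penalty

variable {α ρ : ℝ}

theorem indicator_lt_abs_le_penalty_term (hρ : 0 ≤ ρ) (hρα : 1 ≤ ρ * α) {s t : ℝ}
    (hs₀ : 0 ≤ s) (hs₁ : s ≤ 1) :
    (if α < |t| then (1 : ℝ) else 0) ≤ (1 - s) + ρ * (s * |t|) := by
  have hterm : 0 ≤ ρ * (s * |t|) := by positivity
  split_ifs with ht
  · have : 1 ≤ ρ * |t| := hρα.trans (mul_le_mul_of_nonneg_left ht.le hρ)
    nlinarith
  · linarith

theorem card_filter_lt_abs_le_penalty {ι : Type*} [Fintype ι] (hρ : 0 ≤ ρ) (hρα : 1 ≤ ρ * α)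
    {x v : ι → ℝ} (hv : ∀ i, 0 ≤ v i ∧ v i ≤ 1) :
    ((Finset.univ.filter fun i => α < |x i|).card : ℝ) ≤
      (∑ i, (1 - v i)) + ρ * ∑ i, v i * |x i| := by
  rw [← Finset.sum_boole, Finset.mul_sum, ← Finset.sum_add_distrib]
  exact Finset.sum_le_sum fun i _ =>
    indicator_lt_abs_le_penalty_term hρ hρα (hv i).1 (hv i).2

end Penalty

section ZeroIndicator

variable {n : ℕ}

noncomputable def zeroIndicator (x : Fin n → ℝ) : Fin n → ℝ := fun i => if x i = 0 then 1 else 0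

theorem zeroIndicator_mem_Icc (x : Fin n → ℝ) (i : Fin n) :
    0 ≤ zeroIndicator x i ∧ zeroIndicator x i ≤ 1 := by
  unfold zeroIndicator
  split_ifs <;> norm_num

theorem sum_zeroIndicator_mul_abs (x : Fin n → ℝ) : ∑ i, zeroIndicator x i * |x i| = 0 :=
  Finset.sum_eq_zero fun i _ => by
    unfold zeroIndicator
    split_ifs with h <;> simp [h]

theorem sum_one_sub_zeroIndicator (x : Fin n → ℝ) :
    ∑ i, (1 - zeroIndicator x i) = zeroNorm x := by
  have h : ∀ i, 1 - zeroIndicator x i = if x i ≠ 0 then (1 : ℝ) else 0 := fun i => by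
    unfold zeroIndicator
    split_ifs <;> simp_all
  simp only [h, Finset.sum_boole, zeroNorm]

end ZeroIndicator

theorem mpec_global_opt_is_penalty_global_opt_general {m n : ℕ} (A : Matrix (Fin m) (Fin n) ℝ)
    (b : Fin m → ℝ) (δ : ℝ)
    (r : ℕ)
    (hr : IsLeast {k : ℕ | ∃ x : Fin n → ℝ, euclNorm (A.mulVec x - b) ≤ δ ∧ zeroNorm x = k} r)
    (α : ℝ) (hα : 0 < α)
    (hαr : ∀ x : Fin n → ℝ, euclNorm (A.mulVec x - b) ≤ δ →
      r ≤ (Finset.univ.filter fun i => α < |x i|).card)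
    (ρ : ℝ) (hρ : 1 / α < ρ) :
    ∀ xb vb : Fin n → ℝ,
      -- (x̄, v̄) is feasible for the MPEC problem
      euclNorm (A.mulVec xb - b) ≤ δ → (∑ i, vb i * |xb i|) = 0 → (∀ i, 0 ≤ vb i ∧ vb i ≤ 1) →
      -- (x̄, v̄) is globally optimal for the MPEC problem
      (∀ x v : Fin n → ℝ, euclNorm (A.mulVec x - b) ≤ δ → (∑ i, v i * |x i|) = 0 →
        (∀ i, 0 ≤ v i ∧ v i ≤ 1) → (∑ i, (1 - vb i)) ≤ ∑ i, (1 - v i)) →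
      -- (x̄, v̄) is globally optimal for the penalty problem
      (∀ x v : Fin n → ℝ, euclNorm (A.mulVec x - b) ≤ δ → (∀ i, 0 ≤ v i ∧ v i ≤ 1) →
        (∑ i, (1 - vb i)) + ρ * ∑ i, vb i * |xb i| ≤
          (∑ i, (1 - v i)) + ρ * ∑ i, v i * |x i|) := by
  intro xb vb _ hcompl _ hopt x v hx hv
  obtain ⟨x₀, hx₀, hx₀r⟩ := hr.1
  have hρ₀ : 0 ≤ ρ := (one_div_pos.mpr hα).le.trans hρ.le
  have hρα : 1 ≤ ρ * α := ((div_lt_iff₀ hα).mp hρ).le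
  calc (∑ i, (1 - vb i)) + ρ * ∑ i, vb i * |xb i| = ∑ i, (1 - vb i) := by
        rw [hcompl, mul_zero, add_zero]
    _ ≤ ∑ i, (1 - zeroIndicator x₀ i) :=
        hopt x₀ _ hx₀ (sum_zeroIndicator_mul_abs x₀) (zeroIndicator_mem_Icc x₀)
    _ = r := by rw [sum_one_sub_zeroIndicator, hx₀r]
    _ ≤ (Finset.univ.filter fun i => α < |x i|).card := by exact_mod_cast hαr x hx
    _ ≤ (∑ i, (1 - v i)) + ρ * ∑ i, v i * |x i| := card_filter_lt_abs_le_penalty hρ₀ hρα hv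

/-- let `r = min { ‖x‖₀ : ‖Ax − b‖ ≤ δ } > 0` and `α > 0` be such that the
`r`-th largest component of `|x|` exceeds `α` for all feasible `x` (i.e. every feasible `x`
has at least `r` components with `|xᵢ| > α`). Then for every `ρ > 1/α`, every globally
optimal solution `(x̄, v̄)` of the MPEC problem is globally optimal for the penalty
problem. -/
theorem mpec_global_opt_is_penalty_global_opt {m n : ℕ} (A : Matrix (Fin m) (Fin n) ℝ)
    (b : Fin m → ℝ) (δ : ℝ) (hδ : 0 ≤ δ)
    (hne : ∃ x : Fin n → ℝ, euclNorm (A.mulVec x - b) ≤ δ)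
    (r : ℕ) (hrpos : 0 < r)
    (hr : IsLeast {k : ℕ | ∃ x : Fin n → ℝ, euclNorm (A.mulVec x - b) ≤ δ ∧ zeroNorm x = k} r)
    (α : ℝ) (hα : 0 < α)
    (hαr : ∀ x : Fin n → ℝ, euclNorm (A.mulVec x - b) ≤ δ →
      r ≤ (Finset.univ.filter fun i => α < |x i|).card)
    (ρ : ℝ) (hρ : 1 / α < ρ) :
    ∀ xb vb : Fin n → ℝ,
      -- (x̄, v̄) is feasible for the MPEC problem
      euclNorm (A.mulVec xb - b) ≤ δ → (∑ i, vb i * |xb i|) = 0 → (∀ i, 0 ≤ vb i ∧ vb i ≤ 1) →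
      -- (x̄, v̄) is globally optimal for the MPEC problem
      (∀ x v : Fin n → ℝ, euclNorm (A.mulVec x - b) ≤ δ → (∑ i, v i * |x i|) = 0 →
        (∀ i, 0 ≤ v i ∧ v i ≤ 1) → (∑ i, (1 - vb i)) ≤ ∑ i, (1 - v i)) →
      -- (x̄, v̄) is globally optimal for the penalty problem
      (∀ x v : Fin n → ℝ, euclNorm (A.mulVec x - b) ≤ δ → (∀ i, 0 ≤ v i ∧ v i ≤ 1) →
        (∑ i, (1 - vb i)) + ρ * ∑ i, vb i * |xb i| ≤
          (∑ i, (1 - v i)) + ρ * ∑ i, v i * |x i|) :=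
  mpec_global_opt_is_penalty_global_opt_general A b δ r hr α hα hαr ρ hρ
end

section
/- Let A ∈ ℝ^{m×n}, b ∈ ℝᵐ, δ ≥ 0, and let v ∈ ℝⁿ be a vector with components in {0, 1}. If the set {x ∈ ℝⁿ : ‖Ax − b‖ ≤ δ} is nonempty, then the weighted l₁-norm minimization problem min { ⟨v, |x|⟩ : ‖Ax − b‖ ≤ δ } attains its infimum, i.e., there exists a feasible x̃ with ⟨v, |x̃|⟩ ≤ ⟨v, |x|⟩ for every feasible x. -/
/-!
The objective is `ψ (P x)` with `P x = (v i * x i)ᵢ` and the coercive function `ψ y = ∑ i, |y i|`,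
so it attains its minimum on the image under `P` of the feasible set `A⁻¹(K)`, `K` the compact
ball around `b`, as soon as this image is closed. It is: `y = P x` with `A x ∈ K` iff `(0, y)` lies
in `range (A, P) + (-K) × {0}`, the sum of a closed subspace and a compact set.
-/

/-- The Euclidean norm of a vector in `ℝᵐ`. -/
noncomputable def enorm₂ {m : ℕ} (u : Fin m → ℝ) : ℝ := Real.sqrt (∑ i, u i ^ 2)

open Filter Set Topology
open scoped Pointwise

theorem ContinuousOn.exists_isMinOn_comp_of_isClosed_image {X Y α : Type*} [TopologicalSpace Y]
    [LinearOrder α] [TopologicalSpace α] [ClosedIicTopology α]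
    {f : X → Y} {ψ : Y → α} {s : Set X} (hψ : ContinuousOn ψ (f '' s))
    (hcoer : Tendsto ψ (cocompact Y) atTop) (hs : s.Nonempty) (hclosed : IsClosed (f '' s)) :
    ∃ x ∈ s, IsMinOn (ψ ∘ f) s x := by
  obtain ⟨x₀, hx₀⟩ := hs
  obtain ⟨_, ⟨x, hx, rfl⟩, hmin⟩ := hψ.exists_isMinOn' hclosed (mem_image_of_mem f hx₀)
    ((hcoer.eventually_ge_atTop (ψ (f x₀))).filter_mono inf_le_left)
  exact ⟨x, hx, fun y hy => hmin (mem_image_of_mem f hy)⟩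

theorem LinearMap.isClosed_image_preimage_of_isCompact {E F G : Type*}
    [NormedAddCommGroup E] [NormedSpace ℝ E] [FiniteDimensional ℝ E]
    [NormedAddCommGroup F] [NormedSpace ℝ F] [NormedAddCommGroup G] [NormedSpace ℝ G]
    (A : E →ₗ[ℝ] F) (P : E →ₗ[ℝ] G) {K : Set F} (hK : IsCompact K) :
    IsClosed (P '' (A ⁻¹' K)) := by
  have hR : IsClosed (LinearMap.range (A.prod P) : Set (F × G)) :=
    Submodule.closed_of_finiteDimensional _
  have himage : P '' (A ⁻¹' K) = (fun y => ((0 : F), y)) ⁻¹'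
      ((LinearMap.range (A.prod P) : Set (F × G)) + (-K) ×ˢ {(0 : G)}) := by
    ext y
    simp [Set.mem_add, Prod.ext_iff, add_eq_zero_iff_eq_neg, and_comm]
  rw [himage]
  exact (hR.add_right_of_isCompact (hK.neg.prod isCompact_singleton)).preimage (by fun_prop)

theorem tendsto_sum_abs_cocompact_atTop {ι : Type*} [Fintype ι] :
    Tendsto (fun y : ι → ℝ => ∑ i, |y i|) (cocompact (ι → ℝ)) atTop := by
  refine tendsto_atTop_mono (fun y => ?_) tendsto_norm_cocompact_atTop
  refine (pi_norm_le_iff_of_nonneg (by positivity)).2 fun i => ?_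
  exact (Real.norm_eq_abs _).trans_le
    (Finset.single_le_sum (f := fun i => |y i|) (fun _ _ => abs_nonneg _) (Finset.mem_univ i))

theorem enorm₂_eq_norm_toLp {m : ℕ} (u : Fin m → ℝ) :
    enorm₂ u = ‖(WithLp.toLp 2 u : EuclideanSpace ℝ (Fin m))‖ := by
  simp [enorm₂, EuclideanSpace.norm_eq]

theorem isCompact_setOf_enorm₂_sub_le {m : ℕ} (b : Fin m → ℝ) (δ : ℝ) :
    IsCompact {u : Fin m → ℝ | enorm₂ (u - b) ≤ δ} := by
  have := (PiLp.homeomorph 2 (fun _ : Fin m => ℝ)).symm.isCompact_preimage.2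
    (isCompact_closedBall (WithLp.toLp 2 b : EuclideanSpace ℝ (Fin m)) δ)
  convert this using 1
  ext u
  simp [enorm₂_eq_norm_toLp, dist_eq_norm, PiLp.homeomorph]

theorem weighted_l1_attains_min_general {m n : ℕ} (A : Matrix (Fin m) (Fin n) ℝ)
    (b : Fin m → ℝ) (δ : ℝ)
    (v : Fin n → ℝ) (hv : ∀ i, v i = 0 ∨ v i = 1)
    (hne : ∃ x : Fin n → ℝ, enorm₂ (A.mulVec x - b) ≤ δ) :
    ∃ xt : Fin n → ℝ, enorm₂ (A.mulVec xt - b) ≤ δ ∧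
      ∀ x : Fin n → ℝ, enorm₂ (A.mulVec x - b) ≤ δ →
        (∑ i, v i * |xt i|) ≤ ∑ i, v i * |x i| := by
  have hobj (x : Fin n → ℝ) : ∑ i, v i * |x i| = ∑ i, |(Matrix.diagonal v).mulVecLin x i| := by
    refine Finset.sum_congr rfl fun i _ => ?_
    rcases hv i with h | h <;> simp [Matrix.mulVec_diagonal, h]
  obtain ⟨xt, hxt, hmin⟩ := ContinuousOn.exists_isMinOn_comp_of_isClosed_image
    (by fun_prop) tendsto_sum_abs_cocompact_atTop hne
    (A.mulVecLin.isClosed_image_preimage_of_isCompact (Matrix.diagonal v).mulVecLin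
      (isCompact_setOf_enorm₂_sub_le b δ))
  refine ⟨xt, hxt, fun x hx => ?_⟩
  rw [hobj, hobj]
  exact hmin hx

/-- for a weight vector `v` with components in `{0, 1}`, if the feasible set
`{x : ‖Ax − b‖ ≤ δ}` is nonempty, then the weighted `l₁`-norm minimization problem
`min { ⟨v, |x|⟩ : ‖Ax − b‖ ≤ δ }` attains its infimum. -/
theorem weighted_l1_attains_min {m n : ℕ} (A : Matrix (Fin m) (Fin n) ℝ)
    (b : Fin m → ℝ) (δ : ℝ) (hδ : 0 ≤ δ)
    (v : Fin n → ℝ) (hv : ∀ i, v i = 0 ∨ v i = 1)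
    (hne : ∃ x : Fin n → ℝ, enorm₂ (A.mulVec x - b) ≤ δ) :
    ∃ xt : Fin n → ℝ, enorm₂ (A.mulVec xt - b) ≤ δ ∧
      ∀ x : Fin n → ℝ, enorm₂ (A.mulVec x - b) ≤ δ →
        (∑ i, v i * |xt i|) ≤ ∑ i, v i * |x i| :=
  weighted_l1_attains_min_general A b δ v hv hne
end

section
/- Let δ = 0 and let x* be an optimal solution of min { ‖x‖₀ : Ax = b } with support I* = {i : x*ᵢ ≠ 0} and complement Ī*. Suppose v ∈ ℝⁿ with v ≥ 0 satisfies the null space condition ⟨v_{I*}, |y_{I*}|⟩ < ⟨v_{Ī*}, |y_{Ī*}|⟩ for every nonzero y in the null space of A. Then every optimal solution of the weighted l₁-norm problem min { ⟨v, |x|⟩ : Ax = b } equals x*. -/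
/-- let `x*` be an optimal solution of `min { ‖x‖₀ : Ax = b }` with support
`I*`, and suppose `v ≥ 0` satisfies the null space condition
`⟨v_{I*}, |y_{I*}|⟩ < ⟨v_{Ī*}, |y_{Ī*}|⟩` for every nonzero `y ∈ Null(A)`. Then every
optimal solution of `min { ⟨v, |x|⟩ : Ax = b }` equals `x*`. -/
theorem nsc_exact_recovery {m n : ℕ} (A : Matrix (Fin m) (Fin n) ℝ) (b : Fin m → ℝ)
    (xs : Fin n → ℝ) (hxs : A.mulVec xs = b)
    (hopt : ∀ z : Fin n → ℝ, A.mulVec z = b → zeroNorm xs ≤ zeroNorm z)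
    (v : Fin n → ℝ) (hv : ∀ i, 0 ≤ v i)
    (hNSC : ∀ y : Fin n → ℝ, A.mulVec y = 0 → y ≠ 0 →
      (∑ i ∈ Finset.univ.filter fun i => xs i ≠ 0, v i * |y i|) <
        ∑ i ∈ Finset.univ.filter fun i => xs i = 0, v i * |y i|) :
    ∀ x : Fin n → ℝ, A.mulVec x = b →
      (∀ z : Fin n → ℝ, A.mulVec z = b → (∑ i, v i * |x i|) ≤ ∑ i, v i * |z i|) →
      x = xs := by
  intro x hx hoptx
  by_contra hne
  set y : Fin n → ℝ := x - xs with hy_def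
  have hy : A.mulVec y = 0 := by
    simp [hy_def, Matrix.mulVec_sub, hx, hxs]
  have hy0 : y ≠ 0 := sub_ne_zero.mpr hne
  have key := hNSC y hy hy0
  have hle := hoptx xs hxs
  set I := Finset.univ.filter fun i => xs i ≠ 0 with hI
  set Ic := Finset.univ.filter fun i => xs i = 0 with hIc
  have hfilter : Finset.univ.filter (fun i => ¬ xs i ≠ 0) = Ic := by
    simp [hIc]
  have splitx : (∑ i, v i * |x i|) = (∑ i ∈ I, v i * |x i|) + ∑ i ∈ Ic, v i * |x i| := by
    rw [← Finset.sum_filter_add_sum_filter_not Finset.univ (fun i => xs i ≠ 0), hfilter]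
  have splitxs : (∑ i, v i * |xs i|) = ∑ i ∈ I, v i * |xs i| := by
    rw [← Finset.sum_filter_add_sum_filter_not Finset.univ (fun i => xs i ≠ 0), hfilter]
    have : ∑ i ∈ Ic, v i * |xs i| = 0 := by
      apply Finset.sum_eq_zero
      intro i hi
      simp only [hIc, Finset.mem_filter] at hi
      simp [hi.2]
    rw [this, add_zero]
  have hIcx : ∑ i ∈ Ic, v i * |x i| = ∑ i ∈ Ic, v i * |y i| := by
    apply Finset.sum_congr rfl
    intro i hi
    simp only [hIc, Finset.mem_filter] at hi
    simp [hy_def, hi.2]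
  have hIx : ∑ i ∈ I, v i * (|xs i| - |y i|) ≤ ∑ i ∈ I, v i * |x i| := by
    apply Finset.sum_le_sum
    intro i _
    have h1 : |xs i| - |y i| ≤ |x i| := by
      have : |xs i| ≤ |x i| + |y i| := by
        have : xs i = x i - y i := by simp [hy_def]
        rw [this]
        exact abs_sub _ _
      linarith
    exact mul_le_mul_of_nonneg_left h1 (hv i)
  have hsub : ∑ i ∈ I, v i * (|xs i| - |y i|) =
      (∑ i ∈ I, v i * |xs i|) - ∑ i ∈ I, v i * |y i| := by
    rw [← Finset.sum_sub_distrib]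
    apply Finset.sum_congr rfl
    intro i _
    ring
  have : (∑ i, v i * |xs i|) < ∑ i, v i * |x i| := by
    rw [splitx, splitxs, hIcx]
    rw [hsub] at hIx
    linarith
  linarith
end

section
/- Let δ = 0 and let x* be an optimal solution of min { ‖x‖₀ : Ax = b } with support I*. If v⁰ = e (the all-ones vector) satisfies the null space condition ⟨v⁰_{I*}, |y_{I*}|⟩ < ⟨v⁰_{Ī*}, |y_{Ī*}|⟩ for every nonzero y ∈ Null(A), then the iterates of the exact penalty decomposition method — where xᵏ⁺¹ is any optimal solution of min { ⟨vᵏ, |x|⟩ : Ax = b }, ρₖ = σᵏρ₀ with σ > 1 and ρ₀ > 0, and vᵢᵏ⁺¹ = 0 if |xᵢᵏ⁺¹| > 1/ρₖ and vᵢᵏ⁺¹ = 1 otherwise — satisfy xᵏ = x* for all k ≥ 1. -/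
/-- Key lemma: if weights `w` satisfy `0 ≤ w ≤ 1`, `w = 1` off the support of `xs`, and the
null space condition holds, then any feasible `z` with weighted-ℓ¹ value at most that of `xs`
must equal `xs`. -/
lemma epd_key {m n : ℕ} (A : Matrix (Fin m) (Fin n) ℝ) (b : Fin m → ℝ)
    (xs : Fin n → ℝ) (hxs : A.mulVec xs = b)
    (hNSC : ∀ y : Fin n → ℝ, A.mulVec y = 0 → y ≠ 0 →
      (∑ i ∈ Finset.univ.filter fun i => xs i ≠ 0, |y i|) <
        ∑ i ∈ Finset.univ.filter fun i => xs i = 0, |y i|)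
    (w : Fin n → ℝ) (hw0 : ∀ i, 0 ≤ w i) (hw1 : ∀ i, w i ≤ 1)
    (hwz : ∀ i, xs i = 0 → w i = 1)
    (z : Fin n → ℝ) (hz : A.mulVec z = b)
    (hmin : (∑ i, w i * |z i|) ≤ ∑ i, w i * |xs i|) : z = xs := by
  by_contra hne
  set y : Fin n → ℝ := z - xs with hy
  have hAy : A.mulVec y = 0 := by
    rw [hy, Matrix.mulVec_sub, hxs, hz, sub_self]
  have hyne : y ≠ 0 := sub_ne_zero.mpr hne
  have hnsc := hNSC y hAy hyne
  set T := Finset.univ.filter fun i => xs i ≠ 0 with hT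
  set S := Finset.univ.filter fun i => xs i = 0 with hS
  -- split the sums over T and S
  have hsplit : ∀ f : Fin n → ℝ, (∑ i, f i) = (∑ i ∈ T, f i) + ∑ i ∈ S, f i := by
    intro f
    have := Finset.sum_filter_add_sum_filter_not Finset.univ
      (fun i => xs i ≠ 0) f
    rw [← this]
    congr 1
    · rw [hS]
      congr 1
      ext i
      simp [not_not]
  -- on S, xs = 0, w = 1, y = z
  have hSz : (∑ i ∈ S, w i * |z i|) = ∑ i ∈ S, |y i| := by
    apply Finset.sum_congr rfl
    intro i hi
    have hxi : xs i = 0 := by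
      simpa [hS] using hi
    rw [hwz i hxi, one_mul, hy]
    simp [hxi]
  have hSxs : (∑ i ∈ S, w i * |xs i|) = 0 := by
    apply Finset.sum_eq_zero
    intro i hi
    have hxi : xs i = 0 := by simpa [hS] using hi
    simp [hxi]
  -- on T, w|z| ≥ w|xs| - |y|
  have hTz : (∑ i ∈ T, (w i * |xs i| - |y i|)) ≤ ∑ i ∈ T, w i * |z i| := by
    apply Finset.sum_le_sum
    intro i _
    have h1 : |xs i| ≤ |z i| + |y i| := by
      have hxi : xs i = z i - y i := by simp [hy]
      rw [hxi]
      calc |z i - y i| = |z i + -(y i)| := by ring_nf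
        _ ≤ |z i| + |-(y i)| := abs_add_le _ _
        _ = |z i| + |y i| := by rw [abs_neg]
    have h2 : w i * (|xs i| - |y i|) ≤ w i * |z i| := by
      apply mul_le_mul_of_nonneg_left _ (hw0 i)
      linarith
    have h3 : w i * |y i| ≤ |y i| := by
      nlinarith [abs_nonneg (y i), hw1 i, hw0 i]
    nlinarith
  have hfinal : (∑ i, w i * |xs i|) < ∑ i, w i * |z i| := by
    rw [hsplit (fun i => w i * |xs i|), hsplit (fun i => w i * |z i|), hSxs, hSz]
    have : (∑ i ∈ T, (w i * |xs i| - |y i|)) =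
        (∑ i ∈ T, w i * |xs i|) - ∑ i ∈ T, |y i| := by
      rw [Finset.sum_sub_distrib]
    linarith [hTz, hnsc, this.symm.le, this.le]
  linarith

/-- if `v⁰ = e` satisfies the null space condition relative to the support of
an optimal solution `x*` of `min { ‖x‖₀ : Ax = b }`, then the iterates of the exact penalty
decomposition method (with `ρₖ = σᵏρ₀`, `xᵏ⁺¹` any optimal solution of
`min { ⟨vᵏ, |x|⟩ : Ax = b }`, and `vᵢᵏ⁺¹ = 0` iff `|xᵢᵏ⁺¹| > 1/ρₖ`) satisfy `xᵏ = x*`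
for all `k ≥ 1`. -/
theorem epd_exact_recovery {m n : ℕ} (A : Matrix (Fin m) (Fin n) ℝ) (b : Fin m → ℝ)
    (xs : Fin n → ℝ) (hxs : A.mulVec xs = b)
    (hopt : ∀ z : Fin n → ℝ, A.mulVec z = b → zeroNorm xs ≤ zeroNorm z)
    (σ ρ0 : ℝ) (hσ : 1 < σ) (hρ0 : 0 < ρ0)
    (ρ : ℕ → ℝ) (hρ : ∀ k, ρ k = σ ^ k * ρ0)
    (x v : ℕ → Fin n → ℝ)
    (hv0 : v 0 = fun _ => 1)
    (hvup : ∀ k i, v (k + 1) i = if 1 / ρ k < |x (k + 1) i| then 0 else 1)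
    (hxfeas : ∀ k, A.mulVec (x (k + 1)) = b)
    (hxmin : ∀ k, ∀ z : Fin n → ℝ, A.mulVec z = b →
      (∑ i, v k i * |x (k + 1) i|) ≤ ∑ i, v k i * |z i|)
    (hNSC : ∀ y : Fin n → ℝ, A.mulVec y = 0 → y ≠ 0 →
      (∑ i ∈ Finset.univ.filter fun i => xs i ≠ 0, v 0 i * |y i|) <
        ∑ i ∈ Finset.univ.filter fun i => xs i = 0, v 0 i * |y i|) :
    ∀ k : ℕ, 1 ≤ k → x k = xs := by
  have hNSC' : ∀ y : Fin n → ℝ, A.mulVec y = 0 → y ≠ 0 →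
      (∑ i ∈ Finset.univ.filter fun i => xs i ≠ 0, |y i|) <
        ∑ i ∈ Finset.univ.filter fun i => xs i = 0, |y i| := by
    intro y h1 h2
    simpa [hv0] using hNSC y h1 h2
  have hρpos : ∀ k, 0 < ρ k := by
    intro k
    rw [hρ k]
    positivity
  have main : ∀ k, x (k + 1) = xs := by
    intro k
    induction k with
    | zero =>
      apply epd_key A b xs hxs hNSC' (v 0)
        (by intro i; simp [hv0]) (by intro i; simp [hv0]) (by intro i _; simp [hv0])
        (x 1) (hxfeas 0) (hxmin 0 xs hxs)
    | succ k ih =>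
      have hw0 : ∀ i, 0 ≤ v (k + 1) i := by
        intro i; rw [hvup k i]; split <;> norm_num
      have hw1 : ∀ i, v (k + 1) i ≤ 1 := by
        intro i; rw [hvup k i]; split <;> norm_num
      have hwz : ∀ i, xs i = 0 → v (k + 1) i = 1 := by
        intro i hxi
        have hxk : x (k + 1) i = 0 := by rw [ih]; exact hxi
        rw [hvup k i, hxk, abs_zero, if_neg]
        push_neg
        exact div_nonneg zero_le_one (hρpos k).le
      exact epd_key A b xs hxs hNSC' (v (k + 1)) hw0 hw1 hwz
        (x (k + 2)) (hxfeas (k + 1)) (hxmin (k + 1) xs hxs)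
  intro k hk
  obtain ⟨j, rfl⟩ := Nat.exists_eq_add_of_le hk
  simpa [Nat.add_comm] using main j
end

section
/- Let A ∈ ℝ^{m×n}, b ∈ ℝᵐ, v ∈ ℝⁿ with v ≥ 0, β > 0, λ > 0 and x̄ ∈ ℝⁿ, and define the Lagrangian L(u, x, y) = ⟨v, |x|⟩ + (β/2)‖u‖² + (1/(2λ))‖x − x̄‖² + ⟨y, Ax + u − b⟩. Then for every y ∈ ℝᵐ, the infimum of L(·, ·, y) over (u, x) ∈ ℝᵐ × ℝⁿ is attained and equals −bᵀy − (1/(2β))‖y‖² − (1/(2λ))‖S_λ(x̄ − λAᵀy, v)‖² + (1/(2λ))‖x̄‖², where S_λ(z, v)ᵢ = sign(zᵢ)·max{|zᵢ| − λvᵢ, 0}. -/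
lemma scalar_key (w z x : ℝ) (hw : 0 ≤ w) :
    -(Real.sign z * max (|z| - w) 0)^2/2 ≤ w*|x| + x^2/2 - z*x := by
  rcases eq_or_ne z 0 with hz | hz
  · simp only [hz, Real.sign_zero, zero_mul, zero_mul]
    nlinarith [abs_nonneg x, sq_nonneg x, mul_nonneg hw (abs_nonneg x)]
  · have hs : |Real.sign z| = 1 := by
      rcases lt_or_gt_of_ne hz with h | h
      · rw [Real.sign_of_neg h]; norm_num
      · rw [Real.sign_of_pos h]; norm_num
    rcases le_or_gt (|z|) w with h | h
    · have hm : max (|z| - w) 0 = 0 := max_eq_right (by linarith)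
      rw [hm]
      nlinarith [le_abs_self (z*x), abs_mul z x, abs_nonneg x, sq_nonneg x,
        mul_le_mul_of_nonneg_right h (abs_nonneg x)]
    · have hm : max (|z| - w) 0 = |z| - w := max_eq_left (by linarith)
      rw [hm]
      have h1 : (Real.sign z * (|z| - w))^2 = (|z| - w)^2 := by
        rw [mul_pow, ← sq_abs (Real.sign z), hs]; ring
      rw [h1]
      nlinarith [sq_nonneg (|x| - (|z| - w)), sq_abs x, le_abs_self (z*x), abs_mul z x]

lemma scalar_eq (w z : ℝ) (hw : 0 ≤ w) :
    w * |Real.sign z * max (|z| - w) 0| + (Real.sign z * max (|z| - w) 0)^2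
      = z * (Real.sign z * max (|z| - w) 0) := by
  rcases eq_or_ne z 0 with hz | hz
  · simp [hz]
  · have hs : |Real.sign z| = 1 := by
      rcases lt_or_gt_of_ne hz with h | h
      · rw [Real.sign_of_neg h]; norm_num
      · rw [Real.sign_of_pos h]; norm_num
    have hzs : z * Real.sign z = |z| := by
      rcases lt_or_gt_of_ne hz with h | h
      · rw [Real.sign_of_neg h, abs_of_neg h]; ring
      · rw [Real.sign_of_pos h, abs_of_pos h]; ring
    rcases le_or_gt (|z|) w with h | h
    · have hm : max (|z| - w) 0 = 0 := max_eq_right (by linarith)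
      rw [hm]; simp
    · have hm : max (|z| - w) 0 = |z| - w := max_eq_left (by linarith)
      rw [hm, abs_mul, hs, one_mul, abs_of_nonneg (by linarith : (0:ℝ) ≤ |z| - w)]
      have h1 : (Real.sign z * (|z| - w))^2 = (|z| - w)^2 := by
        rw [mul_pow, ← sq_abs (Real.sign z), hs]; ring
      rw [h1]
      nlinarith [hzs]



lemma scalar_lb (lam vi c xb x : ℝ) (hlam : 0 < lam) (hv : 0 ≤ vi) :
    -(1/(2*lam)) * (Real.sign (xb - lam*c) * max (|xb - lam*c| - lam*vi) 0)^2
      + (1/(2*lam)) * xb^2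
      ≤ vi * |x| + (1/(2*lam)) * (x - xb)^2 + c * x := by
  set s := Real.sign (xb - lam*c) * max (|xb - lam*c| - lam*vi) 0 with hsd
  have h := scalar_key (lam*vi) (xb - lam*c) x (by positivity)
  rw [← hsd] at h
  have h2 : -(s^2) + xb^2 ≤ 2*lam*vi*|x| + (x - xb)^2 + 2*lam*(c*x) := by nlinarith
  have hpos : (0:ℝ) ≤ 1/(2*lam) := by positivity
  have h3 := mul_le_mul_of_nonneg_left h2 hpos
  have e1 : (1/(2*lam)) * (2*lam*vi*|x| + (x - xb)^2 + 2*lam*(c*x))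
      = vi * |x| + (1/(2*lam)) * (x - xb)^2 + c * x := by
    field_simp
  have e2 : (1/(2*lam)) * (-(s^2) + xb^2)
      = -(1/(2*lam)) * s^2 + (1/(2*lam)) * xb^2 := by ring
  linarith [e1 ▸ e2 ▸ h3]

lemma scalar_eq_lam (lam vi c xb : ℝ) (hlam : 0 < lam) (hv : 0 ≤ vi) :
    vi * |Real.sign (xb - lam*c) * max (|xb - lam*c| - lam*vi) 0|
      + (1/(2*lam)) * ((Real.sign (xb - lam*c) * max (|xb - lam*c| - lam*vi) 0) - xb)^2
      + c * (Real.sign (xb - lam*c) * max (|xb - lam*c| - lam*vi) 0)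
      = -(1/(2*lam)) * (Real.sign (xb - lam*c) * max (|xb - lam*c| - lam*vi) 0)^2
        + (1/(2*lam)) * xb^2 := by
  set s := Real.sign (xb - lam*c) * max (|xb - lam*c| - lam*vi) 0 with hsd
  have h := scalar_eq (lam*vi) (xb - lam*c) (by positivity)
  rw [← hsd] at h
  have hl : lam ≠ 0 := ne_of_gt hlam
  field_simp
  nlinarith [h]



/-- The componentwise soft-thresholding operator
`S_λ(z, v)ᵢ = sign(zᵢ) · max{|zᵢ| − λvᵢ, 0}`. -/
noncomputable def softThresh {n : ℕ} (lam : ℝ) (z v : Fin n → ℝ) : Fin n → ℝ :=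
  fun i => Real.sign (z i) * max (|z i| - lam * v i) 0

/-- for every `y ∈ ℝᵐ`, the infimum over `(u, x)` of the Lagrangian
`L(u, x, y) = ⟨v, |x|⟩ + (β/2)‖u‖² + (1/(2λ))‖x − x̄‖² + ⟨y, Ax + u − b⟩`
is attained and equals
`−bᵀy − (1/(2β))‖y‖² − (1/(2λ))‖S_λ(x̄ − λAᵀy, v)‖² + (1/(2λ))‖x̄‖²`. -/
theorem lagrangian_dual_value {m n : ℕ} (A : Matrix (Fin m) (Fin n) ℝ) (b : Fin m → ℝ)
    (v : Fin n → ℝ) (hv : ∀ i, 0 ≤ v i) (β : ℝ) (hβ : 0 < β)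
    (lam : ℝ) (hlam : 0 < lam) (xbar : Fin n → ℝ) (y : Fin m → ℝ) :
    IsLeast
      (Set.range fun p : (Fin m → ℝ) × (Fin n → ℝ) =>
        (∑ i, v i * |p.2 i|) + (β / 2) * (∑ j, p.1 j ^ 2) +
          (1 / (2 * lam)) * (∑ i, (p.2 i - xbar i) ^ 2) +
          ∑ j, y j * (A.mulVec p.2 j + p.1 j - b j))
      (-(∑ j, b j * y j) - (1 / (2 * β)) * (∑ j, y j ^ 2) -
        (1 / (2 * lam)) * (∑ i, softThresh lam (xbar - lam • A.transpose.mulVec y) v i ^ 2) +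
        (1 / (2 * lam)) * ∑ i, xbar i ^ 2) := by
  set c : Fin n → ℝ := A.transpose.mulVec y with hc
  set s : Fin n → ℝ := softThresh lam (xbar - lam • c) v with hsdef
  have hsi : ∀ i, s i = Real.sign (xbar i - lam * c i) *
      max (|xbar i - lam * c i| - lam * v i) 0 := by
    intro i
    simp [hsdef, softThresh]
  -- rewrite the cross term
  have hsum : ∀ x : Fin n → ℝ, ∑ j, y j * A.mulVec x j = ∑ i, c i * x i := by
    intro x
    have := Matrix.dotProduct_mulVec y A x
    simp only [dotProduct] at this
    rw [this, hc]
    refine Finset.sum_congr rfl fun i _ => ?_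
    rw [Matrix.mulVec_transpose]
  -- rearranged objective
  have hF : ∀ p : (Fin m → ℝ) × (Fin n → ℝ),
      ((∑ i, v i * |p.2 i|) + (β / 2) * (∑ j, p.1 j ^ 2) +
        (1 / (2 * lam)) * (∑ i, (p.2 i - xbar i) ^ 2) +
        ∑ j, y j * (A.mulVec p.2 j + p.1 j - b j)) =
      (∑ j, (β/2 * p.1 j^2 + y j * p.1 j)) +
      (∑ i, (v i * |p.2 i| + (1/(2*lam)) * (p.2 i - xbar i)^2 + c i * p.2 i)) -
      ∑ j, y j * b j := by
    intro p
    have e1 : (∑ j, y j * (A.mulVec p.2 j + p.1 j - b j)) =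
        (∑ i, c i * p.2 i) + (∑ j, y j * p.1 j) - ∑ j, y j * b j := by
      rw [← hsum p.2, ← Finset.sum_add_distrib, ← Finset.sum_sub_distrib]
      exact Finset.sum_congr rfl fun j _ => by ring
    rw [e1]
    simp only [Finset.sum_add_distrib, ← Finset.mul_sum]
    ring
  constructor
  · -- membership: minimizer (u*, x*) = (-(1/β) y, s)
    refine ⟨(fun j => -(1/β) * y j, s), ?_⟩
    beta_reduce
    rw [hF]
    have hu : ∀ j, β/2 * (-(1/β) * y j)^2 + y j * (-(1/β) * y j) = -(1/(2*β)) * y j^2 := by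
      intro j; field_simp; ring
    have hx : ∀ i, v i * |s i| + (1/(2*lam)) * (s i - xbar i)^2 + c i * s i
        = -(1/(2*lam)) * s i^2 + (1/(2*lam)) * xbar i^2 := by
      intro i
      rw [hsi i]
      exact scalar_eq_lam lam (v i) (c i) (xbar i) hlam (hv i)
    rw [Finset.sum_congr rfl fun j _ => hu j, Finset.sum_congr rfl fun i _ => hx i]
    have hA : (∑ j, -(1/(2*β)) * y j^2) = -((1/(2*β)) * ∑ j, y j^2) := by
      rw [← Finset.mul_sum, neg_mul]
    have hB : (∑ i, (-(1/(2*lam)) * s i^2 + (1/(2*lam)) * xbar i^2))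
        = -((1/(2*lam)) * ∑ i, s i^2) + (1/(2*lam)) * ∑ i, xbar i^2 := by
      rw [Finset.sum_add_distrib, ← Finset.mul_sum, ← Finset.mul_sum, neg_mul]
    have hb : ∑ j, y j * b j = ∑ j, b j * y j :=
      Finset.sum_congr rfl fun j _ => mul_comm _ _
    rw [hA, hB, hb]
    ring
  · -- lower bound
    rintro val ⟨p, rfl⟩
    beta_reduce
    rw [hF p]
    have hu : ∀ j ∈ Finset.univ, -(1/(2*β)) * y j^2 ≤ β/2 * p.1 j^2 + y j * p.1 j := by
      intro j _
      have hid : β/2 * p.1 j^2 + y j * p.1 j + (1/(2*β)) * y j^2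
          = (β * p.1 j + y j)^2 / (2*β) := by
        field_simp; ring
      have hnn : (0:ℝ) ≤ (β * p.1 j + y j)^2 / (2*β) :=
        div_nonneg (sq_nonneg _) (by linarith)
      linarith
    have hx : ∀ i ∈ Finset.univ, -(1/(2*lam)) * s i^2 + (1/(2*lam)) * xbar i^2
        ≤ v i * |p.2 i| + (1/(2*lam)) * (p.2 i - xbar i)^2 + c i * p.2 i := by
      intro i _
      rw [hsi i]
      exact scalar_lb lam (v i) (c i) (xbar i) (p.2 i) hlam (hv i)
    have h1 := Finset.sum_le_sum hu
    have h2 := Finset.sum_le_sum hx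
    have hA : (∑ j, -(1/(2*β)) * y j^2) = -((1/(2*β)) * ∑ j, y j^2) := by
      rw [← Finset.mul_sum, neg_mul]
    have hB : (∑ i, (-(1/(2*lam)) * s i^2 + (1/(2*lam)) * xbar i^2))
        = -((1/(2*lam)) * ∑ i, s i^2) + (1/(2*lam)) * ∑ i, xbar i^2 := by
      rw [Finset.sum_add_distrib, ← Finset.mul_sum, ← Finset.mul_sum, neg_mul]
    have hb : ∑ j, y j * b j = ∑ j, b j * y j :=
      Finset.sum_congr rfl fun j _ => mul_comm _ _
    rw [← hb]
    linarith [h1, h2, hA, hB]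
end

section
/- Let A ∈ ℝ^{m×n}, b ∈ ℝᵐ, v ∈ ℝⁿ with v ≥ 0, β > 0, λ > 0 and x̄ ∈ ℝⁿ, and define Φ(y) = bᵀy + (1/(2β))‖y‖² + (1/(2λ))‖S_λ(x̄ − λAᵀy, v)‖² for y ∈ ℝᵐ, where S_λ(z, v)ᵢ = sign(zᵢ)·max{|zᵢ| − λvᵢ, 0}. Then Φ is a convex, continuously differentiable function on ℝᵐ with gradient ∇Φ(y) = b + β⁻¹y − A·S_λ(x̄ − λAᵀy, v), and the gradient mapping ∇Φ is Lipschitz continuous on ℝᵐ. -/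
/-- The dual objective
`Φ(y) = bᵀy + (1/(2β))‖y‖² + (1/(2λ))‖S_λ(x̄ − λAᵀy, v)‖²` on Euclidean space `ℝᵐ`. -/
noncomputable def Phi {m n : ℕ} (A : Matrix (Fin m) (Fin n) ℝ) (b : Fin m → ℝ)
    (v xbar : Fin n → ℝ) (β lam : ℝ) (y : EuclideanSpace ℝ (Fin m)) : ℝ :=
  (∑ j, b j * y j) + (1 / (2 * β)) * (∑ j, y j ^ 2) +
    (1 / (2 * lam)) *
      ∑ i, softThresh lam (fun i' => xbar i' - lam * ∑ j, A j i' * y j) v i ^ 2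

/-- The claimed gradient `∇Φ(y) = b + β⁻¹y − A·S_λ(x̄ − λAᵀy, v)`. -/
noncomputable def PhiGrad {m n : ℕ} (A : Matrix (Fin m) (Fin n) ℝ) (b : Fin m → ℝ)
    (v xbar : Fin n → ℝ) (β lam : ℝ) (y : EuclideanSpace ℝ (Fin m)) :
    EuclideanSpace ℝ (Fin m) :=
  (WithLp.equiv 2 (Fin m → ℝ)).symm fun j =>
    b j + β⁻¹ * y j -
      ∑ i, A j i * softThresh lam (fun i' => xbar i' - lam * ∑ j', A j' i' * y j') v i

/-!
Write `eⱼ` for the standard basis of `ℝᵐ` and `aᵢ` for the columns of `A`. Then `Φ` is a sum of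
ridge functions `y ↦ φ ⟪a, y⟫`, with profiles `t ↦ bⱼ t + t² / (2β)` along the `eⱼ` and
`t ↦ S(x̄ᵢ - λt)² / (2λ)` along the `aᵢ`, where `S` is the scalar soft threshold at level
`c = λvᵢ ≥ 0`. Each profile is differentiable with a monotone, Lipschitz derivative, and a ridge
function inherits from its profile convexity, the gradient `φ' ⟪a, y⟫ • a` and a Lipschitz
gradient. For `S` everything rests on `S t - S s ∈ [0, t - s]` for `s ≤ t`, and on `S²` staying
within `(s - t)²` of its tangent lines.
-/

open Set Filter Asymptotics InnerProductSpace Matrix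
open scoped RealInnerProductSpace

noncomputable def softThreshold (c t : ℝ) : ℝ := Real.sign t * max (|t| - c) 0

section SoftThreshold

variable {c : ℝ}

lemma softThreshold_eq_max_sub_max (hc : 0 ≤ c) (t : ℝ) :
    softThreshold c t = max (t - c) 0 - max (-t - c) 0 := by
  rcases lt_trichotomy t 0 with ht | rfl | ht
  · simp [softThreshold, Real.sign_of_neg ht, abs_of_neg ht,
      max_eq_right (by linarith : t - c ≤ 0)]
  · simp [softThreshold, hc]
  · simp [softThreshold, Real.sign_of_pos ht, abs_of_pos ht,
      max_eq_right (by linarith : -t - c ≤ 0)]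

lemma softThreshold_sub_softThreshold_mem_Icc (hc : 0 ≤ c) {s t : ℝ} (hst : s ≤ t) :
    softThreshold c t - softThreshold c s ∈ Icc 0 (t - s) := by
  simp only [softThreshold_eq_max_sub_max hc, mem_Icc, max_def]
  constructor <;> split_ifs <;> linarith

lemma monotone_softThreshold (hc : 0 ≤ c) : Monotone (softThreshold c) := fun _ _ hst =>
  sub_nonneg.1 (softThreshold_sub_softThreshold_mem_Icc hc hst).1

lemma lipschitzWith_one_softThreshold (hc : 0 ≤ c) : LipschitzWith 1 (softThreshold c) := by
  refine LipschitzWith.of_dist_le_mul fun t s => ?_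
  rw [NNReal.coe_one, one_mul, Real.dist_eq, Real.dist_eq]
  wlog hst : s ≤ t generalizing s t
  · rw [abs_sub_comm, abs_sub_comm t]
    exact this s t (le_of_not_ge hst)
  obtain ⟨hlo, hhi⟩ := softThreshold_sub_softThreshold_mem_Icc hc hst
  rw [abs_of_nonneg hlo, abs_of_nonneg (sub_nonneg.2 hst)]
  exact hhi

lemma abs_softThreshold_sq_sub_le (hc : 0 ≤ c) (s t : ℝ) :
    |softThreshold c s ^ 2 - softThreshold c t ^ 2 - (s - t) * (2 * softThreshold c t)|
      ≤ (s - t) ^ 2 := by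
  simp only [softThreshold_eq_max_sub_max hc, max_def]
  rw [abs_le]
  constructor <;> split_ifs <;> nlinarith

end SoftThreshold

lemma hasDerivAt_of_abs_sub_le_sq {f : ℝ → ℝ} {f' x C : ℝ}
    (h : ∀ y, |f y - f x - (y - x) * f'| ≤ C * (y - x) ^ 2) : HasDerivAt f f' x := by
  refine hasDerivAt_iff_isLittleO.2 <|
    (IsBigO.of_bound C (Eventually.of_forall fun y => ?_)).trans_isLittleO
      (isLittleO_pow_sub_sub x one_lt_two)
  simpa [Real.norm_eq_abs, sq_abs] using h y

lemma hasDerivAt_softThreshold_sq {c : ℝ} (hc : 0 ≤ c) (t : ℝ) :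
    HasDerivAt (fun s => softThreshold c s ^ 2) (2 * softThreshold c t) t :=
  hasDerivAt_of_abs_sub_le_sq (C := 1) fun s => by
    simpa using abs_softThreshold_sq_sub_le hc s t

lemma convexOn_univ_of_hasDerivAt {f f' : ℝ → ℝ} (hf : ∀ t, HasDerivAt f (f' t) t)
    (hf' : Monotone f') : ConvexOn ℝ univ f := by
  have hderiv : deriv f = f' := funext fun t => (hf t).deriv
  exact Monotone.convexOn_univ_of_deriv (fun t => (hf t).differentiableAt) (hderiv ▸ hf')

noncomputable def quadSummand (b β t : ℝ) : ℝ := b * t + 1 / (2 * β) * t ^ 2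

noncomputable def threshSummand (c x lam t : ℝ) : ℝ :=
  1 / (2 * lam) * softThreshold c (x - lam * t) ^ 2

lemma hasDerivAt_quadSummand (b β t : ℝ) : HasDerivAt (quadSummand b β) (b + β⁻¹ * t) t := by
  have h := ((hasDerivAt_id t).const_mul b).add ((hasDerivAt_pow 2 t).const_mul (1 / (2 * β)))
  exact h.congr_deriv (by simp only [Nat.cast_ofNat]; ring)

lemma convexOn_quadSummand (b : ℝ) {β : ℝ} (hβ : 0 ≤ β) : ConvexOn ℝ univ (quadSummand b β) :=
  convexOn_univ_of_hasDerivAt (hasDerivAt_quadSummand b β) fun _ _ hst => by gcongr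

lemma lipschitzWith_add_mul (b a : ℝ) : LipschitzWith ‖a‖₊ (fun t : ℝ => b + a * t) := by
  simpa using (LipschitzWith.const b).add (lipschitzWith_smul a)

lemma hasDerivAt_threshSummand {c : ℝ} (hc : 0 ≤ c) (x : ℝ) {lam : ℝ} (hlam : lam ≠ 0) (t : ℝ) :
    HasDerivAt (threshSummand c x lam) (-softThreshold c (x - lam * t)) t := by
  have hinner : HasDerivAt (fun t => x - lam * t) (-lam) t := by
    simpa using ((hasDerivAt_id t).const_mul lam).const_sub x
  have h := ((hasDerivAt_softThreshold_sq hc (x - lam * t)).comp t hinner).const_mul (1 / (2 * lam))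
  exact h.congr_deriv (by field_simp)

lemma monotone_neg_softThreshold_sub_mul {c : ℝ} (hc : 0 ≤ c) (x : ℝ) {lam : ℝ} (hlam : 0 ≤ lam) :
    Monotone (fun t => -softThreshold c (x - lam * t)) := fun _ _ hst =>
  neg_le_neg (monotone_softThreshold hc (by gcongr))

lemma lipschitzWith_neg_softThreshold_sub_mul {c : ℝ} (hc : 0 ≤ c) (x lam : ℝ) :
    LipschitzWith ‖lam‖₊ (fun t => -softThreshold c (x - lam * t)) := by
  have hinner : LipschitzWith ‖lam‖₊ (fun t : ℝ => x - lam * t) := by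
    simpa using (LipschitzWith.const x).sub (lipschitzWith_smul lam)
  have h := ((lipschitzWith_one_softThreshold hc).comp hinner).neg
  rwa [one_mul] at h

lemma convexOn_threshSummand {c : ℝ} (hc : 0 ≤ c) (x : ℝ) {lam : ℝ} (hlam : 0 < lam) :
    ConvexOn ℝ univ (threshSummand c x lam) :=
  convexOn_univ_of_hasDerivAt (hasDerivAt_threshSummand hc x hlam.ne')
    (monotone_neg_softThreshold_sub_mul hc x hlam.le)

section FiniteSums

variable {ι : Type*} {s : Finset ι}

lemma ConvexOn.finset_sum {E : Type*} [AddCommGroup E] [Module ℝ E] {t : Set E}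
    (ht : Convex ℝ t) {f : ι → E → ℝ} (hf : ∀ i ∈ s, ConvexOn ℝ t (f i)) :
    ConvexOn ℝ t (fun x => ∑ i ∈ s, f i x) := by
  classical
  induction s using Finset.induction_on with
  | empty => simpa using convexOn_const (0 : ℝ) ht
  | insert i s hi ih =>
    simp only [Finset.sum_insert hi]
    exact (hf i (by simp)).add (ih fun j hj => hf j (by simp [hj]))

lemma LipschitzWith.finset_sum {α E : Type*} [PseudoEMetricSpace α] [SeminormedAddCommGroup E]
    {f : ι → α → E} {K : ι → NNReal} (hf : ∀ i ∈ s, LipschitzWith (K i) (f i)) :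
    LipschitzWith (∑ i ∈ s, K i) (fun x => ∑ i ∈ s, f i x) := by
  classical
  induction s using Finset.induction_on with
  | empty => simpa using LipschitzWith.const (0 : E)
  | insert i s hi ih =>
    simp only [Finset.sum_insert hi]
    exact (hf i (by simp)).add (ih fun j hj => hf j (by simp [hj]))

variable {𝕜 F : Type*} [RCLike 𝕜] [NormedAddCommGroup F] [InnerProductSpace 𝕜 F] [CompleteSpace F]

lemma HasGradientAt.add {f g : F → 𝕜} {f' g' x : F} (hf : HasGradientAt f f' x)
    (hg : HasGradientAt g g' x) : HasGradientAt (fun y => f y + g y) (f' + g') x := by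
  simp only [hasGradientAt_iff_hasFDerivAt, map_add] at hf hg ⊢
  exact hf.add hg

lemma HasGradientAt.finset_sum {f : ι → F → 𝕜} {f' : ι → F} {x : F}
    (hf : ∀ i ∈ s, HasGradientAt (f i) (f' i) x) :
    HasGradientAt (fun y => ∑ i ∈ s, f i y) (∑ i ∈ s, f' i) x := by
  simp only [hasGradientAt_iff_hasFDerivAt, map_sum] at hf ⊢
  exact HasFDerivAt.fun_sum hf

end FiniteSums

section Ridge

variable {E : Type*} [NormedAddCommGroup E] [InnerProductSpace ℝ E] {φ : ℝ → ℝ}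

lemma ConvexOn.comp_inner (hφ : ConvexOn ℝ univ φ) (a : E) :
    ConvexOn ℝ univ (fun x => φ ⟪a, x⟫) :=
  hφ.comp_linearMap (innerₛₗ ℝ a)

lemma HasDerivAt.hasGradientAt_comp_inner [CompleteSpace E] {φ' : ℝ} {a x : E}
    (hφ : HasDerivAt φ φ' ⟪a, x⟫) : HasGradientAt (fun y => φ ⟪a, y⟫) (φ' • a) x := by
  rw [hasGradientAt_iff_hasFDerivAt, map_smul]
  exact hφ.comp_hasFDerivAt x (innerSL ℝ a).hasFDerivAt

lemma LipschitzWith.smul_comp_inner {K : NNReal} (hφ : LipschitzWith K φ) (a : E) :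
    LipschitzWith (‖a‖₊ * K * ‖a‖₊) (fun x => φ ⟪a, x⟫ • a) := by
  have hinner := (innerSL ℝ a).lipschitz
  rw [show ‖innerSL ℝ a‖₊ = ‖a‖₊ from NNReal.eq (innerSL_apply_norm ℝ a)] at hinner
  have h := (ContinuousLinearMap.toSpanSingleton ℝ a).lipschitz.comp (hφ.comp hinner)
  rwa [ContinuousLinearMap.nnnorm_toSpanSingleton, ← mul_assoc] at h

end Ridge

section RidgeDecomposition

variable {m n : ℕ} (A : Matrix (Fin m) (Fin n) ℝ) (b : Fin m → ℝ) (v xbar : Fin n → ℝ) (β lam : ℝ)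

lemma Phi_eq_sum_inner :
    Phi A b v xbar β lam = fun y =>
      ∑ j, quadSummand (b j) β ⟪EuclideanSpace.single j 1, y⟫ +
        ∑ i, threshSummand (lam * v i) (xbar i) lam ⟪WithLp.toLp 2 (Aᵀ i), y⟫ := by
  ext y
  simp [Phi, quadSummand, threshSummand, softThresh, softThreshold, PiLp.inner_apply,
    Finset.sum_add_distrib, Finset.mul_sum, mul_comm]

lemma PhiGrad_eq_sum_smul :
    PhiGrad A b v xbar β lam = fun y =>
      ∑ j, (b j + β⁻¹ * ⟪EuclideanSpace.single j 1, y⟫) • EuclideanSpace.single j 1 +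
        ∑ i, (-softThreshold (lam * v i) (xbar i - lam * ⟪WithLp.toLp 2 (Aᵀ i), y⟫)) •
          WithLp.toLp 2 (Aᵀ i) := by
  ext y k
  simp [PhiGrad, softThresh, softThreshold, PiLp.inner_apply, Pi.single_apply, mul_comm,
    sub_eq_add_neg]

end RidgeDecomposition

/-- `Φ` is convex and continuously differentiable on `ℝᵐ` with gradient
`∇Φ(y) = b + β⁻¹y − A·S_λ(x̄ − λAᵀy, v)`, and `∇Φ` is Lipschitz continuous. -/
theorem Phi_convex_differentiable_lipschitz {m n : ℕ} (A : Matrix (Fin m) (Fin n) ℝ)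
    (b : Fin m → ℝ) (v : Fin n → ℝ) (hv : ∀ i, 0 ≤ v i)
    (β : ℝ) (hβ : 0 < β) (lam : ℝ) (hlam : 0 < lam) (xbar : Fin n → ℝ) :
    ConvexOn ℝ Set.univ (Phi A b v xbar β lam) ∧
    (∀ y : EuclideanSpace ℝ (Fin m),
      HasGradientAt (Phi A b v xbar β lam) (PhiGrad A b v xbar β lam y) y) ∧
    (∃ K : NNReal, LipschitzWith K (PhiGrad A b v xbar β lam)) := by
  have hc : ∀ i, 0 ≤ lam * v i := fun i => mul_nonneg hlam.le (hv i)
  rw [Phi_eq_sum_inner, PhiGrad_eq_sum_smul]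
  refine ⟨?_, fun y => ?_, ?_⟩
  · exact (ConvexOn.finset_sum convex_univ fun j _ =>
        (convexOn_quadSummand (b j) hβ.le).comp_inner _).add
      (ConvexOn.finset_sum convex_univ fun i _ =>
        (convexOn_threshSummand (hc i) (xbar i) hlam).comp_inner _)
  · exact (HasGradientAt.finset_sum fun j _ =>
        (hasDerivAt_quadSummand (b j) β _).hasGradientAt_comp_inner).add
      (HasGradientAt.finset_sum fun i _ =>
        (hasDerivAt_threshSummand (hc i) (xbar i) hlam.ne' _).hasGradientAt_comp_inner)
  · exact ⟨_, (LipschitzWith.finset_sum fun j _ =>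
        (lipschitzWith_add_mul (b j) β⁻¹).smul_comp_inner _).add
      (LipschitzWith.finset_sum fun i _ =>
        (lipschitzWith_neg_softThreshold_sub_mul (hc i) (xbar i) lam).smul_comp_inner _)⟩
end

section
/- Let A ∈ ℝ^{m×n}, b ∈ ℝᵐ, v ∈ ℝⁿ with v ≥ 0, β > 0, λ > 0 and x̄ ∈ ℝⁿ, and define Φ(y) = bᵀy + (1/(2β))‖y‖² + (1/(2λ))‖S_λ(x̄ − λAᵀy, v)‖², where S_λ(z, v)ᵢ = sign(zᵢ)·max{|zᵢ| − λvᵢ, 0}. If ŷ ∈ ℝᵐ satisfies b + β⁻¹ŷ − A·S_λ(x̄ − λAᵀŷ, v) = 0, then the pair (û, x̂) with û = −β⁻¹ŷ and x̂ = S_λ(x̄ − λAᵀŷ, v) is the unique optimal solution of the problem min { ⟨v, |x|⟩ + (β/2)‖u‖² + (1/(2λ))‖x − x̄‖² : Ax + u = b } over (u, x) ∈ ℝᵐ × ℝⁿ. -/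
open Matrix

noncomputable def shrink (c z : ℝ) : ℝ := Real.sign z * max (|z| - c) 0

lemma softThresh_apply {n : ℕ} (lam : ℝ) (z v : Fin n → ℝ) (i : Fin n) :
    softThresh lam z v i = shrink (lam * v i) (z i) := rfl

section shrink

variable {c z : ℝ}

lemma shrink_of_abs_le (h : |z| ≤ c) : shrink c z = 0 := by
  simp [shrink, max_eq_right (sub_nonpos.mpr h)]

lemma shrink_of_lt (h : c < z) (hc : 0 ≤ c) : shrink c z = z - c := by
  have hz : 0 < z := by linarith
  rw [shrink, Real.sign_of_pos hz, abs_of_pos hz, max_eq_left (by linarith), one_mul]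

lemma shrink_of_lt_neg (h : z < -c) (hc : 0 ≤ c) : shrink c z = z + c := by
  have hz : z < 0 := by linarith
  rw [shrink, Real.sign_of_neg hz, abs_of_neg hz, max_eq_left (by linarith)]
  ring

lemma shrink_cases (hc : 0 ≤ c) :
    (|z| ≤ c ∧ shrink c z = 0) ∨ (c < z ∧ shrink c z = z - c) ∨
      (z < -c ∧ shrink c z = z + c) := by
  rcases le_or_gt |z| c with h | h
  · exact .inl ⟨h, shrink_of_abs_le h⟩
  rcases lt_abs.mp h with h' | h'
  · exact .inr (.inl ⟨h', shrink_of_lt h' hc⟩)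
  · exact .inr (.inr ⟨by linarith, shrink_of_lt_neg (by linarith) hc⟩)

-- Together with the next lemma: `z - shrink c z` is a subgradient of `c |·|` at `shrink c z`.
lemma abs_sub_shrink_le (hc : 0 ≤ c) : |z - shrink c z| ≤ c := by
  rcases shrink_cases (z := z) hc with ⟨h, hs⟩ | ⟨h, hs⟩ | ⟨h, hs⟩ <;> rw [hs]
  · simpa using h
  · simp [abs_of_nonneg hc]
  · simp [abs_of_nonneg hc]

lemma sub_shrink_mul_shrink (hc : 0 ≤ c) :
    (z - shrink c z) * shrink c z = c * |shrink c z| := by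
  rcases shrink_cases (z := z) hc with ⟨h, hs⟩ | ⟨h, hs⟩ | ⟨h, hs⟩ <;> rw [hs]
  · simp
  · rw [abs_of_pos (by linarith)]; ring
  · rw [abs_of_neg (by linarith)]; ring

lemma shrink_three_point (hc : 0 ≤ c) (x : ℝ) :
    2 * c * |shrink c z| + (shrink c z - z) ^ 2 + (x - shrink c z) ^ 2 ≤
      2 * c * |x| + (x - z) ^ 2 := by
  have hx : (z - shrink c z) * x ≤ c * |x| :=
    calc (z - shrink c z) * x ≤ |z - shrink c z| * |x| := by
          rw [← abs_mul]; exact le_abs_self _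
      _ ≤ c * |x| := mul_le_mul_of_nonneg_right (abs_sub_shrink_le hc) (abs_nonneg x)
  linear_combination 2 * hx - 2 * sub_shrink_mul_shrink (z := z) hc

end shrink

lemma sum_sq_eq_add_sum_sq_sub {ι : Type*} [Fintype ι] (a b : ι → ℝ) :
    ∑ j, a j ^ 2 = ∑ j, b j ^ 2 + ∑ j, (a j - b j) ^ 2 + 2 * (b ⬝ᵥ (a - b)) := by
  simp only [dotProduct, Finset.mul_sum, ← Finset.sum_add_distrib, Pi.sub_apply]
  exact Finset.sum_congr rfl fun j _ => by ring

lemma eq_of_sum_sq_sub_eq_zero {ι : Type*} [Fintype ι] {x y : ι → ℝ}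
    (h : ∑ i, (x i - y i) ^ 2 = 0) : x = y := by
  funext i
  have hi := (Finset.sum_eq_zero_iff_of_nonneg fun i _ => sq_nonneg (x i - y i)).mp h i
    (Finset.mem_univ i)
  exact sub_eq_zero.mp (pow_eq_zero_iff two_ne_zero |>.mp hi)

section primal

variable {m n : ℕ}

lemma softThresh_three_point {lam : ℝ} (hlam : 0 ≤ lam) {v : Fin n → ℝ} (hv : ∀ i, 0 ≤ v i)
    (xbar w x : Fin n → ℝ) {s : Fin n → ℝ} (hs : s = softThresh lam (xbar - lam • w) v) :
    2 * lam * ∑ i, v i * |s i| + ∑ i, (s i - xbar i) ^ 2 + ∑ i, (x i - s i) ^ 2 ≤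
      2 * lam * ∑ i, v i * |x i| + ∑ i, (x i - xbar i) ^ 2 + 2 * lam * (w ⬝ᵥ (x - s)) := by
  subst hs
  simp only [dotProduct, Finset.mul_sum, ← Finset.sum_add_distrib, Pi.sub_apply]
  refine Finset.sum_le_sum fun i _ => ?_
  have h := shrink_three_point (z := xbar i - lam * w i) (mul_nonneg hlam (hv i)) (x i)
  simp only [softThresh_apply, Pi.sub_apply, Pi.smul_apply, smul_eq_mul]
  linear_combination h

noncomputable def primalObjective (v : Fin n → ℝ) (β lam : ℝ) (xbar : Fin n → ℝ) (u : Fin m → ℝ)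
    (x : Fin n → ℝ) : ℝ :=
  (∑ i, v i * |x i|) + (β / 2) * (∑ j, u j ^ 2) + (1 / (2 * lam)) * ∑ i, (x i - xbar i) ^ 2

lemma primalObjective_add_sum_sq_le {A : Matrix (Fin m) (Fin n) ℝ} {b : Fin m → ℝ}
    {v : Fin n → ℝ} (hv : ∀ i, 0 ≤ v i) {β lam : ℝ} (hβ : 0 < β) (hlam : 0 < lam)
    {xbar : Fin n → ℝ} {yhat uhat : Fin m → ℝ} {xhat : Fin n → ℝ}
    (huhat : uhat = -β⁻¹ • yhat) (hxhat : xhat = softThresh lam (xbar - lam • Aᵀ *ᵥ yhat) v)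
    (hfeas : A *ᵥ xhat + uhat = b) {u : Fin m → ℝ} {x : Fin n → ℝ} (hux : A *ᵥ x + u = b) :
    primalObjective v β lam xbar uhat xhat + (β / 2) * ∑ j, (u j - uhat j) ^ 2 +
        (1 / (2 * lam)) * ∑ i, (x i - xhat i) ^ 2 ≤
      primalObjective v β lam xbar u x := by
  have hx := softThresh_three_point hlam.le hv xbar (Aᵀ *ᵥ yhat) x hxhat
  have hu := sum_sq_eq_add_sum_sq_sub u uhat
  have hlink : (Aᵀ *ᵥ yhat) ⬝ᵥ (x - xhat) = β * (uhat ⬝ᵥ (u - uhat)) := by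
    have hA : A *ᵥ (x - xhat) = -(u - uhat) := by
      rw [mulVec_sub, eq_sub_of_add_eq hux, eq_sub_of_add_eq hfeas]; abel
    have hy : yhat = -β • uhat := by
      rw [huhat, smul_smul, neg_mul_neg, mul_inv_cancel₀ hβ.ne', one_smul]
    rw [mulVec_transpose, ← dotProduct_mulVec, hA, hy, dotProduct_neg, neg_smul, neg_dotProduct,
      smul_dotProduct, smul_eq_mul, neg_neg]
  unfold primalObjective
  have h2lam : 2 * lam * (1 / (2 * lam)) = 1 := by field_simp
  linear_combination (1 / (2 * lam)) * hx - (β / 2) * hu + hlink +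
    (∑ i, v i * |x i| - ∑ i, v i * |xhat i| + (Aᵀ *ᵥ yhat) ⬝ᵥ (x - xhat)) * h2lam

end primal

/-- if `ŷ` satisfies `b + β⁻¹ŷ − A·S_λ(x̄ − λAᵀŷ, v) = 0`, then
`(û, x̂) = (−β⁻¹ŷ, S_λ(x̄ − λAᵀŷ, v))` is the unique optimal solution of
`min { ⟨v, |x|⟩ + (β/2)‖u‖² + (1/(2λ))‖x − x̄‖² : Ax + u = b }`. -/
theorem dual_root_gives_unique_primal_solution {m n : ℕ} (A : Matrix (Fin m) (Fin n) ℝ)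
    (b : Fin m → ℝ) (v : Fin n → ℝ) (hv : ∀ i, 0 ≤ v i)
    (β : ℝ) (hβ : 0 < β) (lam : ℝ) (hlam : 0 < lam) (xbar : Fin n → ℝ)
    (yhat : Fin m → ℝ)
    (hroot : (fun j => b j + β⁻¹ * yhat j -
      A.mulVec (softThresh lam (xbar - lam • A.transpose.mulVec yhat) v) j) = 0)
    (uhat : Fin m → ℝ) (huhat : uhat = fun j => -β⁻¹ * yhat j)
    (xhat : Fin n → ℝ) (hxhat : xhat = softThresh lam (xbar - lam • A.transpose.mulVec yhat) v) :
    -- (û, x̂) is feasible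
    (A.mulVec xhat + uhat = b) ∧
    -- (û, x̂) is optimal
    (∀ u : Fin m → ℝ, ∀ x : Fin n → ℝ, A.mulVec x + u = b →
      (∑ i, v i * |xhat i|) + (β / 2) * (∑ j, uhat j ^ 2) +
          (1 / (2 * lam)) * (∑ i, (xhat i - xbar i) ^ 2) ≤
        (∑ i, v i * |x i|) + (β / 2) * (∑ j, u j ^ 2) +
          (1 / (2 * lam)) * ∑ i, (x i - xbar i) ^ 2) ∧
    -- (û, x̂) is the unique optimal solution
    (∀ u : Fin m → ℝ, ∀ x : Fin n → ℝ, A.mulVec x + u = b →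
      (∑ i, v i * |x i|) + (β / 2) * (∑ j, u j ^ 2) +
          (1 / (2 * lam)) * (∑ i, (x i - xbar i) ^ 2) ≤
        (∑ i, v i * |xhat i|) + (β / 2) * (∑ j, uhat j ^ 2) +
          (1 / (2 * lam)) * (∑ i, (xhat i - xbar i) ^ 2) →
      u = uhat ∧ x = xhat) := by
  have hfeas : A *ᵥ xhat + uhat = b := by
    funext j
    have hj := congrFun hroot j
    subst huhat hxhat
    simp only [Pi.add_apply, Pi.zero_apply] at hj ⊢
    linarith
  have hgrowth {u x} (hux : A *ᵥ x + u = b) :=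
    primalObjective_add_sum_sq_le hv hβ hlam huhat hxhat hfeas hux
  simp only [primalObjective] at hgrowth
  have hβ2 : 0 < β / 2 := by positivity
  have hlam2 : 0 < 1 / (2 * lam) := by positivity
  refine ⟨hfeas, fun u x hux => ?_, fun u x hux hle => ?_⟩
  · have hgap := hgrowth hux
    have hu : 0 ≤ ∑ j, (u j - uhat j) ^ 2 := by positivity
    have hx : 0 ≤ ∑ i, (x i - xhat i) ^ 2 := by positivity
    nlinarith
  · have hgap := hgrowth hux
    have hu : 0 ≤ ∑ j, (u j - uhat j) ^ 2 := by positivity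
    have hx : 0 ≤ ∑ i, (x i - xhat i) ^ 2 := by positivity
    exact ⟨eq_of_sum_sq_sub_eq_zero (by nlinarith), eq_of_sum_sq_sub_eq_zero (by nlinarith)⟩
end
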